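/- arXiv:1407.3985 — 7 statements merged into one kernel-verified Lean document; each statement's English description precedes it below -/
import Mathlib

section
/- The function f₀ defined by f₀(r) = 2γ_d ∫₀^r ((u²/(1+u²))^{-(d-1)/2} ∫₀^u v^{d-1}/(1+v²)^{(d+1)/2} dv) du satisfies f₀(0+) = 0 and f₀(r)/r → 1 as r → ∞. -/
/-!
The substitution `x = v² / (1 + v²)` turns `∫₀^∞ v^(d-1) (1 + v²)^(-(d+1)/2) dv` into half the
Beta integral `B(d/2, 1/2) = √π Γ(d/2) / Γ((d+1)/2)`, which is `1 / (2γ_d)`. The integrand of `f₀`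
is the inner integral weighted by `(u² / (1 + u²))^(-(d-1)/2)`; the inner integral is at most
`u^d / d`, so the integrand is `O(u)` near `0` and `f₀(0+) = 0`. As `u → ∞` the weight tends to `1`
and the inner integral to `1 / (2γ_d)`, so `f₀' → 1` and `f₀(r) / r → 1` by the Cesàro mean.
-/

open MeasureTheory Real Filter Set Topology Asymptotics

lemma ofReal_rpow_mul_one_sub_rpow {a b x : ℝ} (hx : x ∈ Icc (0 : ℝ) 1) :
    ((x ^ (a - 1) * (1 - x) ^ (b - 1) : ℝ) : ℂ)
      = (x : ℂ) ^ ((a : ℂ) - 1) * (1 - (x : ℂ)) ^ ((b : ℂ) - 1) := by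
  push_cast
  rw [Complex.ofReal_cpow hx.1, Complex.ofReal_cpow (by linarith [hx.2])]
  push_cast
  rfl

theorem integrableOn_rpow_mul_one_sub_rpow {a b : ℝ} (ha : 0 < a) (hb : 0 < b) :
    IntegrableOn (fun x : ℝ => x ^ (a - 1) * (1 - x) ^ (b - 1)) (Ioo 0 1) := by
  have hC : IntegrableOn (fun x : ℝ => (x : ℂ) ^ ((a : ℂ) - 1) * (1 - (x : ℂ)) ^ ((b : ℂ) - 1))
      (Ioo 0 1) :=
    ((intervalIntegrable_iff_integrableOn_Ioc_of_le zero_le_one).mp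
      (Complex.betaIntegral_convergent (by simpa) (by simpa))).mono_set Ioo_subset_Ioc_self
  refine IntegrableOn.congr_fun hC.re (fun x hx => ?_) measurableSet_Ioo
  rw [← ofReal_rpow_mul_one_sub_rpow (Ioo_subset_Icc_self hx)]
  rfl

theorem integral_rpow_mul_one_sub_rpow {a b : ℝ} (ha : 0 < a) (hb : 0 < b) :
    ∫ x in Ioo (0 : ℝ) 1, x ^ (a - 1) * (1 - x) ^ (b - 1) = Gamma a * Gamma b / Gamma (a + b) := by
  have hbeta : Complex.betaIntegral a b
      = ((∫ x in Ioo (0 : ℝ) 1, x ^ (a - 1) * (1 - x) ^ (b - 1) : ℝ) : ℂ) := by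
    rw [Complex.betaIntegral, intervalIntegral.integral_of_le zero_le_one,
      integral_Ioc_eq_integral_Ioo, ← integral_complex_ofReal]
    refine setIntegral_congr_fun measurableSet_Ioo fun x hx => ?_
    exact (ofReal_rpow_mul_one_sub_rpow (Ioo_subset_Icc_self hx)).symm
  have h := Complex.Gamma_mul_Gamma_eq_betaIntegral (s := a) (t := b) (by simpa) (by simpa)
  rw [hbeta, ← Complex.ofReal_add, Complex.Gamma_ofReal, Complex.Gamma_ofReal,
    Complex.Gamma_ofReal] at h
  rw [eq_div_iff (Gamma_pos_of_pos (add_pos ha hb)).ne', mul_comm]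
  exact_mod_cast h.symm

lemma hasDerivAt_sq_div_one_add_sq (v : ℝ) :
    HasDerivAt (fun v : ℝ => v ^ 2 / (1 + v ^ 2)) (2 * v / (1 + v ^ 2) ^ 2) v := by
  have hsq : HasDerivAt (fun v : ℝ => v ^ 2) (2 * v) v := by simpa using hasDerivAt_pow 2 v
  refine (hsq.div (hsq.const_add 1) (by positivity)).congr_deriv ?_
  field_simp
  ring

lemma strictMonoOn_sq_div_one_add_sq :
    StrictMonoOn (fun v : ℝ => v ^ 2 / (1 + v ^ 2)) (Ici 0) := by
  intro x hx y hy hxy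
  simp only [mem_Ici] at hx hy
  rw [div_lt_div_iff₀ (by positivity) (by positivity)]
  nlinarith

lemma image_sq_div_one_add_sq_Ioi :
    (fun v : ℝ => v ^ 2 / (1 + v ^ 2)) '' Ioi 0 = Ioo 0 1 := by
  ext y
  constructor
  · rintro ⟨v, hv : 0 < v, rfl⟩
    refine ⟨by positivity, ?_⟩
    rw [div_lt_one (by positivity)]
    linarith
  · rintro ⟨hy0, hy1⟩
    have h1y : 0 < 1 - y := by linarith
    refine ⟨√(y / (1 - y)), sqrt_pos.mpr (by positivity), ?_⟩
    simp only [sq_sqrt (by positivity : 0 ≤ y / (1 - y))]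
    field_simp
    ring

lemma abs_deriv_mul_beta_integrand_sq_div_one_add_sq (a b : ℝ) {v : ℝ} (hv : 0 < v) :
    |2 * v / (1 + v ^ 2) ^ 2|
        * ((v ^ 2 / (1 + v ^ 2)) ^ (a - 1) * (1 - v ^ 2 / (1 + v ^ 2)) ^ (b - 1))
      = 2 * (v ^ (2 * a - 1) / (1 + v ^ 2) ^ (a + b)) := by
  have hA : 0 < 1 + v ^ 2 := by positivity
  have h1 : 1 - v ^ 2 / (1 + v ^ 2) = (1 + v ^ 2)⁻¹ := by field_simp; ring
  have h2 : (v ^ 2) ^ (a - 1) = v ^ (2 * a - 1) * v⁻¹ := by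
    rw [← rpow_natCast, ← rpow_mul hv.le, ← rpow_neg_one, ← rpow_add hv]
    congr 1; push_cast; ring
  rw [abs_of_pos (by positivity), h1, div_rpow (by positivity) hA.le, h2, inv_rpow hA.le,
    ← rpow_neg hA.le]
  field_simp
  rw [← rpow_add hA, ← rpow_natCast (1 + v ^ 2) 2, ← rpow_add hA]
  congr 1
  push_cast
  ring

theorem integrableOn_rpow_div_one_add_sq_rpow {a b : ℝ} (ha : 0 < a) (hb : 0 < b) :
    IntegrableOn (fun v : ℝ => v ^ (2 * a - 1) / (1 + v ^ 2) ^ (a + b)) (Ioi 0) := by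
  have h := (integrableOn_image_iff_integrableOn_abs_deriv_smul measurableSet_Ioi
    (fun v _ => (hasDerivAt_sq_div_one_add_sq v).hasDerivWithinAt)
    (strictMonoOn_sq_div_one_add_sq.injOn.mono Ioi_subset_Ici_self)
    (fun x : ℝ => x ^ (a - 1) * (1 - x) ^ (b - 1))).mp
  rw [image_sq_div_one_add_sq_Ioi] at h
  refine IntegrableOn.congr_fun ((h (integrableOn_rpow_mul_one_sub_rpow ha hb)).const_mul 2⁻¹)
    (fun v hv => ?_) measurableSet_Ioi
  rw [smul_eq_mul, abs_deriv_mul_beta_integrand_sq_div_one_add_sq a b hv,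
    inv_mul_cancel_left₀ two_ne_zero]

theorem integral_rpow_div_one_add_sq_rpow {a b : ℝ} (ha : 0 < a) (hb : 0 < b) :
    ∫ v in Ioi (0 : ℝ), v ^ (2 * a - 1) / (1 + v ^ 2) ^ (a + b)
      = Gamma a * Gamma b / (2 * Gamma (a + b)) := by
  have h := integral_image_eq_integral_abs_deriv_smul measurableSet_Ioi
    (fun v _ => (hasDerivAt_sq_div_one_add_sq v).hasDerivWithinAt)
    (strictMonoOn_sq_div_one_add_sq.injOn.mono Ioi_subset_Ici_self)
    (fun x : ℝ => x ^ (a - 1) * (1 - x) ^ (b - 1))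
  simp only [smul_eq_mul] at h
  rw [image_sq_div_one_add_sq_Ioi, integral_rpow_mul_one_sub_rpow ha hb,
    setIntegral_congr_fun measurableSet_Ioi
      (fun v hv => abs_deriv_mul_beta_integrand_sq_div_one_add_sq a b hv),
    integral_const_mul] at h
  linear_combination (-1 / 2 : ℝ) * h

theorem tendsto_inv_smul_intervalIntegral_of_tendsto {E : Type*} [NormedAddCommGroup E]
    [NormedSpace ℝ E] [CompleteSpace E] {g : ℝ → E} {L : E}
    (hint : ∀ r, 0 ≤ r → IntervalIntegrable g volume 0 r) (hg : Tendsto g atTop (𝓝 L)) :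
    Tendsto (fun r => r⁻¹ • ∫ u in (0 : ℝ)..r, g u) atTop (𝓝 L) := by
  have hdev : (fun r => (∫ u in (0 : ℝ)..r, g u) - r • L) =o[atTop] id := by
    refine isLittleO_iff.2 fun ε hε => ?_
    obtain ⟨R, hR⟩ :=
      eventually_atTop.1 (hg.eventually (Metric.closedBall_mem_nhds L (half_pos hε)))
    set R' := max R 0
    set C := ‖(∫ u in (0 : ℝ)..R', g u) - R' • L‖
    filter_upwards [eventually_ge_atTop R', eventually_ge_atTop (2 * C / ε)] with r hRr hCr
    have hR'r : IntervalIntegrable g volume R' r :=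
      (hint R' (le_max_right _ _)).symm.trans (hint r ((le_max_right _ _).trans hRr))
    have hsplit : (∫ u in (0 : ℝ)..r, g u) - r • L
        = ((∫ u in (0 : ℝ)..R', g u) - R' • L) + ∫ u in R'..r, (g u - L) := by
      rw [intervalIntegral.integral_sub hR'r intervalIntegrable_const,
        intervalIntegral.integral_const,
        ← intervalIntegral.integral_add_adjacent_intervals (hint R' (le_max_right _ _)) hR'r,
        sub_smul]
      abel
    have htail : ‖∫ u in R'..r, (g u - L)‖ ≤ ε / 2 * (r - R') := by
      have := intervalIntegral.norm_integral_le_of_norm_le_const (C := ε / 2) (a := R') (b := r)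
        (f := fun u => g u - L) fun u hu => by
          rw [uIoc_of_le hRr] at hu
          exact (dist_eq_norm _ _).symm.trans_le (hR u ((le_max_left _ _).trans hu.1.le))
      rwa [abs_of_nonneg (sub_nonneg.2 hRr)] at this
    have hr0 : 0 ≤ r := (le_max_right _ _).trans hRr
    rw [hsplit, id, Real.norm_of_nonneg hr0]
    have hC : C ≤ ε / 2 * r := by
      rw [div_le_iff₀ hε] at hCr; linarith
    calc _ ≤ C + ε / 2 * (r - R') := (norm_add_le _ _).trans (add_le_add le_rfl htail)
      _ ≤ ε * r := by nlinarith [le_max_right R 0]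
  have := hdev.tendsto_inv_smul_nhds_zero.add_const L
  rw [zero_add] at this
  refine this.congr' ?_
  filter_upwards [eventually_gt_atTop 0] with r hr
  simp [smul_sub, smul_smul, inv_mul_cancel₀ hr.ne']

/-- The Cauchy density `(1 + |x|²)^(-(s+1)/2)` on `ℝ^s` in polar coordinates, without the
angular factor. -/
noncomputable def cauchyRadial (s v : ℝ) : ℝ := v ^ (s - 1) / (1 + v ^ 2) ^ ((s + 1) / 2)

noncomputable def cauchyRadialMass (s u : ℝ) : ℝ := ∫ v in (0 : ℝ)..u, cauchyRadial s v

noncomputable def profileIntegrand (s u : ℝ) : ℝ :=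
  (u ^ 2 / (1 + u ^ 2)) ^ (-((s - 1) / 2)) * cauchyRadialMass s u

lemma cauchyRadial_eq (s v : ℝ) :
    cauchyRadial s v = v ^ (2 * (s / 2) - 1) / (1 + v ^ 2) ^ (s / 2 + 1 / 2) := by
  rw [cauchyRadial]
  ring_nf

theorem integrableOn_cauchyRadial {s : ℝ} (hs : 0 < s) : IntegrableOn (cauchyRadial s) (Ioi 0) := by
  rw [show cauchyRadial s = _ from funext (cauchyRadial_eq s)]
  exact integrableOn_rpow_div_one_add_sq_rpow (half_pos hs) one_half_pos

theorem integral_cauchyRadial {s : ℝ} (hs : 0 < s) :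
    ∫ v in Ioi (0 : ℝ), cauchyRadial s v = √π * Gamma (s / 2) / (2 * Gamma ((s + 1) / 2)) := by
  simp only [cauchyRadial_eq]
  rw [integral_rpow_div_one_add_sq_rpow (half_pos hs) one_half_pos, Gamma_one_half_eq, add_div s 1]
  ring

lemma cauchyRadial_nonneg (s : ℝ) {v : ℝ} (hv : 0 ≤ v) : 0 ≤ cauchyRadial s v := by
  unfold cauchyRadial; positivity

lemma cauchyRadial_le_rpow {s : ℝ} (hs : 0 < s) {v : ℝ} (hv : 0 ≤ v) :
    cauchyRadial s v ≤ v ^ (s - 1) :=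
  div_le_self (rpow_nonneg hv _) (one_le_rpow (by nlinarith) (by linarith))

lemma continuous_cauchyRadial {s : ℝ} (hs : 1 ≤ s) : Continuous (cauchyRadial s) :=
  (continuous_rpow_const (by linarith)).div
    ((continuous_const.add (continuous_pow 2)).rpow_const fun v =>
      Or.inl (by positivity : (0 : ℝ) < 1 + v ^ 2).ne')
    fun _ => by positivity

lemma intervalIntegrable_cauchyRadial {s : ℝ} (hs : 0 < s) {u : ℝ} (hu : 0 ≤ u) :
    IntervalIntegrable (cauchyRadial s) volume 0 u :=
  (intervalIntegrable_iff_integrableOn_Ioc_of_le hu).2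
    ((integrableOn_cauchyRadial hs).mono_set Ioc_subset_Ioi_self)

lemma cauchyRadialMass_nonneg (s : ℝ) {u : ℝ} (hu : 0 ≤ u) : 0 ≤ cauchyRadialMass s u :=
  intervalIntegral.integral_nonneg hu fun _ hv => cauchyRadial_nonneg s hv.1

lemma cauchyRadialMass_le {s : ℝ} (hs : 0 < s) {u : ℝ} (hu : 0 ≤ u) :
    cauchyRadialMass s u ≤ u ^ s / s := by
  calc cauchyRadialMass s u ≤ ∫ v in (0 : ℝ)..u, v ^ (s - 1) :=
        intervalIntegral.integral_mono_on hu (intervalIntegrable_cauchyRadial hs hu)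
          (intervalIntegral.intervalIntegrable_rpow' (by linarith))
          fun v hv => cauchyRadial_le_rpow hs hv.1
    _ = u ^ s / s := by
        rw [integral_rpow (Or.inl (by linarith)), sub_add_cancel, zero_rpow hs.ne', sub_zero]

lemma continuous_cauchyRadialMass {s : ℝ} (hs : 1 ≤ s) : Continuous (cauchyRadialMass s) :=
  intervalIntegral.continuous_primitive
    (fun _ _ => (continuous_cauchyRadial hs).intervalIntegrable _ _) 0

lemma tendsto_cauchyRadialMass_atTop {s : ℝ} (hs : 0 < s) :
    Tendsto (cauchyRadialMass s) atTop (𝓝 (∫ v in Ioi (0 : ℝ), cauchyRadial s v)) :=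
  intervalIntegral_tendsto_integral_Ioi 0 (integrableOn_cauchyRadial hs) tendsto_id

lemma sq_div_one_add_sq_rpow_neg {u : ℝ} (hu : 0 < u) (p : ℝ) :
    (u ^ 2 / (1 + u ^ 2)) ^ (-p) = (1 + u ^ 2) ^ p / u ^ (2 * p) := by
  rw [rpow_neg (by positivity), div_rpow (by positivity) (by positivity), inv_div,
    ← rpow_natCast, ← rpow_mul hu.le]
  norm_num

lemma tendsto_sq_div_one_add_sq_rpow_atTop (p : ℝ) :
    Tendsto (fun u : ℝ => (u ^ 2 / (1 + u ^ 2)) ^ p) atTop (𝓝 1) := by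
  have h : Tendsto (fun u : ℝ => 1 - (1 + u ^ 2)⁻¹) atTop (𝓝 1) := by
    simpa using tendsto_const_nhds.sub
      (tendsto_atTop_add_const_left _ 1 (tendsto_pow_atTop (α := ℝ) two_ne_zero)).inv_tendsto_atTop
  have h' : Tendsto (fun u : ℝ => u ^ 2 / (1 + u ^ 2)) atTop (𝓝 1) :=
    h.congr fun u => by field_simp; ring
  have := (continuousAt_rpow_const 1 p (Or.inl one_ne_zero)).tendsto.comp h'
  rwa [one_rpow] at this

lemma profileIntegrand_nonneg (s : ℝ) {u : ℝ} (hu : 0 ≤ u) : 0 ≤ profileIntegrand s u :=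
  mul_nonneg (by positivity) (cauchyRadialMass_nonneg s hu)

lemma profileIntegrand_le {s : ℝ} (hs : 0 < s) {u : ℝ} (hu : 0 < u) :
    profileIntegrand s u ≤ (1 + u ^ 2) ^ ((s - 1) / 2) * u / s := by
  calc profileIntegrand s u ≤ (u ^ 2 / (1 + u ^ 2)) ^ (-((s - 1) / 2)) * (u ^ s / s) :=
        mul_le_mul_of_nonneg_left (cauchyRadialMass_le hs hu.le) (by positivity)
    _ = (1 + u ^ 2) ^ ((s - 1) / 2) * u / s := by
        rw [sq_div_one_add_sq_rpow_neg hu, mul_div_cancel₀ _ (two_ne_zero' ℝ)]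
        have : u ^ s = u ^ (s - 1) * u := by
          rw [← rpow_add_one hu.ne', sub_add_cancel]
        rw [this]
        field_simp

lemma norm_profileIntegrand_le {s : ℝ} (hs : 1 ≤ s) {r u : ℝ} (hu : u ∈ Ioc 0 r) :
    ‖profileIntegrand s u‖ ≤ (1 + r ^ 2) ^ ((s - 1) / 2) * r / s := by
  obtain ⟨hu0, hur⟩ := hu
  rw [Real.norm_of_nonneg (profileIntegrand_nonneg s hu0.le)]
  refine (profileIntegrand_le (by linarith) hu0).trans ?_
  have : 0 ≤ (s - 1) / 2 := by linarith
  gcongr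

lemma measurable_profileIntegrand {s : ℝ} (hs : 1 ≤ s) : Measurable (profileIntegrand s) :=
  (by fun_prop : Measurable fun u : ℝ => (u ^ 2 / (1 + u ^ 2)) ^ (-((s - 1) / 2))).mul
    (continuous_cauchyRadialMass hs).measurable

lemma intervalIntegrable_profileIntegrand {s : ℝ} (hs : 1 ≤ s) {r : ℝ} (hr : 0 ≤ r) :
    IntervalIntegrable (profileIntegrand s) volume 0 r := by
  rw [intervalIntegrable_iff_integrableOn_Ioc_of_le hr]
  exact Measure.integrableOn_of_bounded measure_Ioc_lt_top.ne
    (measurable_profileIntegrand hs).aestronglyMeasurable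
    ((ae_restrict_iff' measurableSet_Ioc).2
      (ae_of_all _ fun _ hu => norm_profileIntegrand_le hs hu))

theorem tendsto_integral_profileIntegrand_nhdsGT {s : ℝ} (hs : 1 ≤ s) :
    Tendsto (fun r => ∫ u in (0 : ℝ)..r, profileIntegrand s u) (𝓝[>] 0) (𝓝 0) := by
  have hbound : Tendsto (fun r : ℝ => (1 + r ^ 2) ^ ((s - 1) / 2) * r / s * |r - 0|)
      (𝓝[>] 0) (𝓝 0) :=
    (Continuous.tendsto' (by fun_prop (disch := linarith)) 0 0 (by simp)).mono_left
      nhdsWithin_le_nhds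
  refine squeeze_zero_norm' ?_ hbound
  filter_upwards [self_mem_nhdsWithin] with r (hr : 0 < r)
  refine intervalIntegral.norm_integral_le_of_norm_le_const fun u hu => ?_
  exact norm_profileIntegrand_le hs (by rwa [uIoc_of_le hr.le] at hu)

theorem tendsto_profileIntegrand_atTop {s : ℝ} (hs : 0 < s) :
    Tendsto (profileIntegrand s) atTop (𝓝 (∫ v in Ioi (0 : ℝ), cauchyRadial s v)) := by
  have := (tendsto_sq_div_one_add_sq_rpow_atTop (-((s - 1) / 2))).mul
    (tendsto_cauchyRadialMass_atTop hs)
  rwa [one_mul] at this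

/-- The function `f₀` satisfies `f₀(0+) = 0` and `f₀(r)/r → 1` as `r → ∞`. -/
theorem stmt2 (d : ℕ) (hd : 2 ≤ d) (γ : ℝ)
    (hγ : γ = (1 / Real.sqrt π) * (Real.Gamma (((d : ℝ) + 1) / 2) / Real.Gamma ((d : ℝ) / 2)))
    (f₀ : ℝ → ℝ)
    (hf : ∀ r : ℝ, f₀ r = 2 * γ * ∫ u in (0:ℝ)..r,
      (u ^ 2 / (1 + u ^ 2)) ^ (-(((d : ℝ) - 1) / 2)) *
        ∫ v in (0:ℝ)..u, v ^ ((d : ℝ) - 1) / (1 + v ^ 2) ^ (((d : ℝ) + 1) / 2)) :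
    Tendsto f₀ (nhdsWithin 0 (Set.Ioi 0)) (nhds 0) ∧
      Tendsto (fun r => f₀ r / r) atTop (nhds 1) := by
  have hs : (1 : ℝ) ≤ d := by exact_mod_cast one_le_two.trans hd
  have hf₀ : f₀ = fun r => 2 * γ * ∫ u in (0 : ℝ)..r, profileIntegrand d u := funext hf
  have hnorm : 2 * γ * ∫ v in Ioi (0 : ℝ), cauchyRadial d v = 1 := by
    have : 0 < Gamma (d / 2) := Gamma_pos_of_pos (by positivity)
    have : 0 < Gamma ((d + 1) / 2) := Gamma_pos_of_pos (by positivity)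
    rw [integral_cauchyRadial (by linarith), hγ]
    field_simp
  subst hf₀
  constructor
  · simpa using (tendsto_integral_profileIntegrand_nhdsGT hs).const_mul (2 * γ)
  · have h := (tendsto_inv_smul_intervalIntegral_of_tendsto
      (fun _ hr => intervalIntegrable_profileIntegrand hs hr)
      (tendsto_profileIntegrand_atTop (by linarith))).const_mul (2 * γ)
    rw [hnorm] at h
    refine h.congr fun r => ?_
    rw [smul_eq_mul]
    ring
end

section
/- If f is a C² function on (0,∞) and l ≥ 1 an integer, and one sets y(x) for x < 0 by f(r) = r^l y(−r²), then f satisfies (1/2)(1+r²) f'' + ((d−1)/(2r)) f' − (l(l+d−2)/(2r²)) f = 0 if and only if y satisfies the hypergeometric equation x(1−x) y'' + (l + d/2 − x(l + 1/2)) y' − (l(l−1)/4) y = 0 on the negative half-line. -/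
/-!
Write `f r = r ^ l * g r` with `g r = y (-r²)`. The chain rule gives `g' = -2r y'` and
`g'' = 4r² y'' - 2y'`, and substituting into the radial operator yields the identity
`L f (r) = -2 r^l · H y (-r²)` for every `r > 0`, where `L` and `H` are the two differential
operators. Since `r ^ l ≠ 0` and `r ↦ -r²` maps `(0, ∞)` onto `(-∞, 0)`, one side vanishes
identically iff the other does.
-/

open Set Filter Topology

theorem hasDerivAt_pow_of_ne_zero {𝕜 : Type*} [NontriviallyNormedField 𝕜] (n : ℕ) {x : 𝕜}
    (hx : x ≠ 0) : HasDerivAt (fun t => t ^ n) (n * x ^ n / x) x := by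
  convert hasDerivAt_pow n x using 1
  cases n with
  | zero => simp
  | succ k => rw [pow_succ]; field_simp; simp

theorem hasDerivAt_comp_neg_sq {y : ℝ → ℝ} {s : ℝ} (hy : DifferentiableAt ℝ y (-(s ^ 2))) :
    HasDerivAt (fun t => y (-(t ^ 2))) (-2 * s * deriv y (-(s ^ 2))) s :=
  (hy.hasDerivAt.comp s (hasDerivAt_pow 2 s).fun_neg).congr_deriv (by ring)

noncomputable def radialOperator (d l : ℕ) (f : ℝ → ℝ) (r : ℝ) : ℝ :=
  (1 / 2) * (1 + r ^ 2) * deriv (deriv f) r + (((d : ℝ) - 1) / (2 * r)) * deriv f r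
    - ((l : ℝ) * ((l : ℝ) + (d : ℝ) - 2) / (2 * r ^ 2)) * f r

/-- The hypergeometric operator `x(1-x)y'' + (c - (a+b+1)x)y' - ab y` with `a = l/2`,
`b = (l-1)/2`, `c = l + d/2`. -/
noncomputable def hypergeometricOperator (d l : ℕ) (y : ℝ → ℝ) (x : ℝ) : ℝ :=
  x * (1 - x) * deriv (deriv y) x
    + ((l : ℝ) + (d : ℝ) / 2 - x * ((l : ℝ) + 1 / 2)) * deriv y x
    - ((l : ℝ) * ((l : ℝ) - 1) / 4) * y x

section Substitution

variable (l : ℕ) {f y : ℝ → ℝ}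

theorem hasDerivAt_pow_mul_comp_neg_sq {s : ℝ} (hs : s ≠ 0)
    (hy : DifferentiableAt ℝ y (-(s ^ 2))) :
    HasDerivAt (fun t => t ^ l * y (-(t ^ 2)))
      (s ^ l * (l / s * y (-(s ^ 2)) - 2 * s * deriv y (-(s ^ 2)))) s :=
  ((hasDerivAt_pow_of_ne_zero l hs).fun_mul (hasDerivAt_comp_neg_sq hy)).congr_deriv (by ring)

variable (hy : DifferentiableOn ℝ y (Iio 0))
  (hfy : ∀ r : ℝ, 0 < r → f r = r ^ l * y (-(r ^ 2)))
include hy hfy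

theorem deriv_eq_of_eq_pow_mul_comp_neg_sq {s : ℝ} (hs : 0 < s) :
    deriv f s = s ^ l * (l / s * y (-(s ^ 2)) - 2 * s * deriv y (-(s ^ 2))) := by
  have hev : f =ᶠ[𝓝 s] fun t => t ^ l * y (-(t ^ 2)) :=
    eventuallyEq_of_mem (Ioi_mem_nhds hs) hfy
  have hys := hy.differentiableAt (Iio_mem_nhds (neg_neg_of_pos (pow_pos hs 2)))
  exact ((hasDerivAt_pow_mul_comp_neg_sq l hs.ne' hys).congr_of_eventuallyEq hev).deriv

theorem deriv_deriv_eq_of_eq_pow_mul_comp_neg_sq (hy' : DifferentiableOn ℝ (deriv y) (Iio 0))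
    {r : ℝ} (hr : 0 < r) :
    deriv (deriv f) r = r ^ l * (l * (l - 1) / r ^ 2 * y (-(r ^ 2))
      - 2 * (2 * l + 1) * deriv y (-(r ^ 2)) + 4 * r ^ 2 * deriv (deriv y) (-(r ^ 2))) := by
  have hev : deriv f =ᶠ[𝓝 r]
      fun t => t ^ l * (l * t⁻¹ * y (-(t ^ 2))) - 2 * (t ^ l * t * deriv y (-(t ^ 2))) :=
    eventuallyEq_of_mem (Ioi_mem_nhds hr) fun t ht => by
      rw [deriv_eq_of_eq_pow_mul_comp_neg_sq l hy hfy ht]; ring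
  have hpow := hasDerivAt_pow_of_ne_zero l hr.ne'
  have hinv := hasDerivAt_inv hr.ne'
  have hnhds : Iio 0 ∈ 𝓝 (-(r ^ 2)) := Iio_mem_nhds (neg_neg_of_pos (pow_pos hr 2))
  have hyr := hasDerivAt_comp_neg_sq (hy.differentiableAt hnhds)
  have hy'r := hasDerivAt_comp_neg_sq (hy'.differentiableAt hnhds)
  have hmodel := (hpow.mul ((hinv.const_mul (l : ℝ)).mul hyr)).sub
    (((hpow.mul (hasDerivAt_id r)).mul hy'r).const_mul 2)
  rw [(hmodel.congr_of_eventuallyEq hev).deriv]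
  simp only [Pi.mul_apply, id]
  field_simp
  ring

theorem radialOperator_eq_mul_hypergeometricOperator (d : ℕ)
    (hy' : DifferentiableOn ℝ (deriv y) (Iio 0)) {r : ℝ} (hr : 0 < r) :
    radialOperator d l f r = -2 * r ^ l * hypergeometricOperator d l y (-(r ^ 2)) := by
  rw [radialOperator, hypergeometricOperator,
    deriv_deriv_eq_of_eq_pow_mul_comp_neg_sq l hy hfy hy' hr,
    deriv_eq_of_eq_pow_mul_comp_neg_sq l hy hfy hr, hfy r hr]
  field_simp
  ring

end Substitution

theorem stmt3_general (d l : ℕ)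
    (f y : ℝ → ℝ)
    (hy : ContDiffOn ℝ 2 y (Set.Iio 0))
    (hfy : ∀ r : ℝ, 0 < r → f r = r ^ l * y (-(r ^ 2))) :
    (∀ r : ℝ, 0 < r →
        (1 / 2) * (1 + r ^ 2) * deriv (deriv f) r + (((d : ℝ) - 1) / (2 * r)) * deriv f r
          - ((l : ℝ) * ((l : ℝ) + (d : ℝ) - 2) / (2 * r ^ 2)) * f r = 0)
      ↔ (∀ x : ℝ, x < 0 →
        x * (1 - x) * deriv (deriv y) x
          + ((l : ℝ) + (d : ℝ) / 2 - x * ((l : ℝ) + 1 / 2)) * deriv y x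
          - ((l : ℝ) * ((l : ℝ) - 1) / 4) * y x = 0) := by
  have hy' : DifferentiableOn ℝ (deriv y) (Iio 0) :=
    (hy.deriv_of_isOpen isOpen_Iio (m := 1) le_rfl).differentiableOn one_ne_zero
  have key : ∀ r : ℝ, 0 < r →
      radialOperator d l f r = -2 * r ^ l * hypergeometricOperator d l y (-(r ^ 2)) :=
    fun r hr => radialOperator_eq_mul_hypergeometricOperator l
      (hy.differentiableOn two_ne_zero) hfy d hy' hr
  change (∀ r : ℝ, 0 < r → radialOperator d l f r = 0) ↔
    ∀ x : ℝ, x < 0 → hypergeometricOperator d l y x = 0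
  constructor
  · intro h x hx
    obtain ⟨r, hr, rfl⟩ : ∃ r : ℝ, 0 < r ∧ -(r ^ 2) = x :=
      ⟨√(-x), Real.sqrt_pos.mpr (neg_pos.mpr hx), by rw [Real.sq_sqrt (by linarith)]; ring⟩
    have hne : -2 * r ^ l ≠ 0 := mul_ne_zero (by norm_num) (pow_ne_zero l hr.ne')
    exact (mul_eq_zero.mp ((key r hr).symm.trans (h r hr))).resolve_left hne
  · intro h r hr
    rw [key r hr, h _ (neg_neg_of_pos (pow_pos hr 2)), mul_zero]

/-- The substitution `f(r) = r^l y(−r²)` transforms the radial ODE into the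
hypergeometric equation with parameters `a = l/2`, `b = (l−1)/2`, `c = l + d/2`. -/
theorem stmt3 (d l : ℕ) (hd : 2 ≤ d) (hl : 1 ≤ l)
    (f y : ℝ → ℝ)
    (hf : ContDiffOn ℝ 2 f (Set.Ioi 0)) (hy : ContDiffOn ℝ 2 y (Set.Iio 0))
    (hfy : ∀ r : ℝ, 0 < r → f r = r ^ l * y (-(r ^ 2))) :
    (∀ r : ℝ, 0 < r →
        (1 / 2) * (1 + r ^ 2) * deriv (deriv f) r + (((d : ℝ) - 1) / (2 * r)) * deriv f r
          - ((l : ℝ) * ((l : ℝ) + (d : ℝ) - 2) / (2 * r ^ 2)) * f r = 0)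
      ↔ (∀ x : ℝ, x < 0 →
        x * (1 - x) * deriv (deriv y) x
          + ((l : ℝ) + (d : ℝ) / 2 - x * ((l : ℝ) + 1 / 2)) * deriv y x
          - ((l : ℝ) * ((l : ℝ) - 1) / 4) * y x = 0) :=
  stmt3_general d l f y hy hfy
end

section
/- If u : ℝ^d → ℝ is a convex function such that for some continuous g : S^{d−1} → ℝ, u(rθ)/r → g(θ) as r → ∞ for every θ ∈ S^{d−1}, then the function v(x) = |x| g(x/|x|) (with v(0) = 0) is convex on ℝ^d. -/
open Filter Topology

/- Convexity of `v` is inherited from `u`: each `x ↦ u (r • x) / r` with `r > 0` is convex, and `v`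
is their pointwise limit as `r → ∞`, because the limit `u (r • x) / r → ‖x‖ g(x / ‖x‖)` follows from
the hypothesis along the unit vector `x / ‖x‖` by rescaling `r`. -/

theorem ConvexOn.of_tendsto {ι E : Type*} [AddCommMonoid E] [Module ℝ E] {l : Filter ι} [l.NeBot]
    {s : Set E} {f : ι → E → ℝ} {w : E → ℝ} (hs : Convex ℝ s)
    (hf : ∀ᶠ i in l, ConvexOn ℝ s (f i)) (hlim : ∀ x ∈ s, Tendsto (f · x) l (𝓝 (w x))) :
    ConvexOn ℝ s w :=
  ⟨hs, fun x hx y hy a b ha hb hab =>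
    le_of_tendsto_of_tendsto (hlim _ (hs hx hy ha hb hab))
      (((hlim x hx).const_mul a).add ((hlim y hy).const_mul b))
      (hf.mono fun _ hi => hi.2 hx hy ha hb hab)⟩

theorem ConvexOn.comp_smul_div {E : Type*} [AddCommGroup E] [Module ℝ E] {u : E → ℝ}
    (hu : ConvexOn ℝ Set.univ u) {r : ℝ} (hr : 0 ≤ r) :
    ConvexOn ℝ Set.univ fun x => u (r • x) / r := by
  have h := (hu.comp_linearMap (LinearMap.lsmul ℝ E r)).smul (inv_nonneg.2 hr)
  simp only [Set.preimage_univ, smul_eq_mul, Function.comp_def, LinearMap.lsmul_apply] at h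
  simpa only [div_eq_inv_mul] using h

theorem Filter.Tendsto.apply_smul_div_smul_of_pos {E : Type*} [AddCommGroup E] [Module ℝ E]
    {u : E → ℝ} {y : E} {L c : ℝ} (hc : 0 < c)
    (hlim : Tendsto (fun r : ℝ => u (r • y) / r) atTop (𝓝 L)) :
    Tendsto (fun r : ℝ => u (r • c • y) / r) atTop (𝓝 (c * L)) := by
  refine ((hlim.comp (tendsto_id.atTop_mul_const hc)).const_mul c).congr' ?_
  filter_upwards [eventually_gt_atTop 0] with r hr
  simp only [Function.comp_apply, id, mul_smul]
  field_simp

theorem stmt10_general (d : ℕ)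
    (u : EuclideanSpace ℝ (Fin d) → ℝ) (hu : ConvexOn ℝ Set.univ u)
    (g : EuclideanSpace ℝ (Fin d) → ℝ)
    (hlim : ∀ θ : EuclideanSpace ℝ (Fin d), ‖θ‖ = 1 →
      Tendsto (fun r : ℝ => u (r • θ) / r) atTop (nhds (g θ)))
    (v : EuclideanSpace ℝ (Fin d) → ℝ) (hv0 : v 0 = 0)
    (hv : ∀ x : EuclideanSpace ℝ (Fin d), x ≠ 0 → v x = ‖x‖ * g (‖x‖⁻¹ • x)) :
    ConvexOn ℝ Set.univ v := by
  refine .of_tendsto convex_univ ((eventually_ge_atTop 0).mono fun r hr => hu.comp_smul_div hr)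
    fun x _ => ?_
  rcases eq_or_ne x 0 with rfl | hx
  · simpa [hv0] using tendsto_const_nhds.div_atTop tendsto_id
  · have hnx : 0 < ‖x‖ := norm_pos_iff.2 hx
    have hθ : ‖‖x‖⁻¹ • x‖ = 1 := by simpa using norm_smul_inv_norm (𝕜 := ℝ) hx
    have h := (hlim _ hθ).apply_smul_div_smul_of_pos hnx
    rwa [smul_inv_smul₀ hnx.ne', ← hv x hx] at h

/-- If `u` is convex on `ℝ^d` and `u(rθ)/r → g(θ)` for every unit vector `θ`,
then `v(x) = |x| g(x/|x|)` (with `v 0 = 0`) is convex. -/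
theorem stmt10 (d : ℕ) (hd : 2 ≤ d)
    (u : EuclideanSpace ℝ (Fin d) → ℝ) (hu : ConvexOn ℝ Set.univ u)
    (g : EuclideanSpace ℝ (Fin d) → ℝ)
    (hg : ContinuousOn g (Metric.sphere (0 : EuclideanSpace ℝ (Fin d)) 1))
    (hlim : ∀ θ : EuclideanSpace ℝ (Fin d), ‖θ‖ = 1 →
      Tendsto (fun r : ℝ => u (r • θ) / r) atTop (nhds (g θ)))
    (v : EuclideanSpace ℝ (Fin d) → ℝ) (hv0 : v 0 = 0)
    (hv : ∀ x : EuclideanSpace ℝ (Fin d), x ≠ 0 → v x = ‖x‖ * g (‖x‖⁻¹ • x)) :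
    ConvexOn ℝ Set.univ v :=
  stmt10_general d u hu g hlim v hv0 hv
end

section
/- For every l ≥ 1 and d ≥ 2, the function f_l(r) = r^l · (Γ((l+d+1)/2)Γ(l/2)/(Γ(l+d/2)Γ(1/2))) · ₂F₁(l/2, (l−1)/2; l+d/2; −r²) satisfies lim_{r→∞} f_l(r)/r = 1. -/
open MeasureTheory Filter

/-- The Gauss hypergeometric function `₂F₁(a,b;c;x)`, defined for `b ≥ 0`, `c > b`
and `x ≤ 0` by Euler's integral representation
`₂F₁(a,b;c;x) = Γ(c)/(Γ(b)Γ(c-b)) ∫₀¹ t^(b-1)(1-t)^(c-b-1)(1-xt)^(-a) dt`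
(equal to `1` when `b = 0`). -/
noncomputable def Gauss2F1 (a b c x : ℝ) : ℝ :=
  if b = 0 then 1 else
    (Real.Gamma c / (Real.Gamma b * Real.Gamma (c - b))) *
      ∫ t in (0:ℝ)..1, t ^ (b - 1) * (1 - t) ^ (c - b - 1) * (1 - x * t) ^ (-a)

/-! The substitution `u = s t` gives
`s^b ∫₀¹ t^(b-1) (1-t)^(c-b-1) (1+st)^(-a) dt = ∫₀ˢ u^(b-1) (1-u/s)^(c-b-1) (1+u)^(-a) du`,
and by dominated convergence this tends, as `s → ∞`, to the beta integral of the second kind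
`∫₀^∞ u^(b-1) (1+u)^(-a) du = Γ(b)Γ(a-b)/Γ(a)`. Hence `(-x)^b ₂F₁(a,b;c;x) → Γ(c)Γ(a-b)/(Γ(c-b)Γ(a))`
as `x → -∞`. For `a = l/2`, `b = (l-1)/2`, `c = l+d/2`, `x = -r²` we have `(-x)^b = r^(l-1)`,
and the limit is exactly the reciprocal of the normalising constant of `f_l`. -/

open Set Topology

theorem integral_rpow_mul_one_sub_rpow_s11 {u v : ℝ} (hu : 0 < u) (hv : 0 < v) :
    ∫ x in (0:ℝ)..1, x ^ (u - 1) * (1 - x) ^ (v - 1)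
      = Real.Gamma u * Real.Gamma v / Real.Gamma (u + v) := by
  have hβ : Complex.betaIntegral u v = ↑(∫ x in (0:ℝ)..1, x ^ (u - 1) * (1 - x) ^ (v - 1)) := by
    rw [← intervalIntegral.integral_ofReal]
    refine intervalIntegral.integral_congr fun x hx => ?_
    rw [uIcc_of_le zero_le_one] at hx
    push_cast
    rw [Complex.ofReal_cpow hx.1, Complex.ofReal_cpow (sub_nonneg.2 hx.2)]
    push_cast
    rfl
  have := ProbabilityTheory.beta_eq_betaIntegralReal u v hu hv
  rw [hβ, Complex.ofReal_re] at this
  exact this.symm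

lemma image_div_one_sub_Ioo : (fun x : ℝ => x / (1 - x)) '' Ioo 0 1 = Ioi 0 := by
  ext t
  constructor
  · rintro ⟨x, hx, rfl⟩
    exact div_pos hx.1 (sub_pos.2 hx.2)
  · intro (ht : 0 < t)
    refine ⟨t / (1 + t), ⟨by positivity, (div_lt_one (by positivity)).2 (by linarith)⟩, ?_⟩
    field_simp
    ring

lemma injOn_div_one_sub_Ioo : InjOn (fun x : ℝ => x / (1 - x)) (Ioo 0 1) := by
  intro x hx y hy h
  have hx' : 1 - x ≠ 0 := (sub_pos.2 hx.2).ne'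
  have hy' : 1 - y ≠ 0 := (sub_pos.2 hy.2).ne'
  field_simp at h
  linarith

lemma hasDerivAt_div_one_sub {x : ℝ} (hx : x ≠ 1) :
    HasDerivAt (fun y : ℝ => y / (1 - y)) ((1 - x) ^ 2)⁻¹ x := by
  have h : 1 - x ≠ 0 := sub_ne_zero.2 hx.symm
  refine ((hasDerivAt_id' x).div ((hasDerivAt_const x 1).sub (hasDerivAt_id' x)) h).congr_deriv ?_
  simp only [Pi.sub_apply]
  field_simp
  ring

/-- The substitution `t = x / (1 - x)` turns the integrand of the beta integral of the second
kind into that of the first kind. -/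
lemma abs_inv_sq_one_sub_smul_rpow {u v x : ℝ} (hx : x ∈ Ioo (0:ℝ) 1) :
    |((1 - x) ^ 2)⁻¹| • ((x / (1 - x)) ^ (u - 1) * (1 + x / (1 - x)) ^ (-(u + v)))
      = x ^ (u - 1) * (1 - x) ^ (v - 1) := by
  have h0 : 0 < x := hx.1
  have h1 : 0 < 1 - x := sub_pos.2 hx.2
  have e1 : 1 + x / (1 - x) = (1 - x)⁻¹ := by field_simp; ring
  rw [smul_eq_mul, e1, abs_of_pos (by positivity), Real.div_rpow h0.le h1.le,
    Real.inv_rpow h1.le, Real.rpow_neg h1.le, inv_inv, ← Real.rpow_natCast, ← Real.rpow_neg h1.le,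
    div_eq_mul_inv, ← Real.rpow_neg h1.le]
  rw [show ∀ p q r : ℝ, p * (x ^ (u - 1) * q * r) = x ^ (u - 1) * (p * q * r) by intros; ring,
    ← Real.rpow_add h1, ← Real.rpow_add h1]
  ring_nf

theorem integral_Ioi_rpow_mul_one_add_rpow {u v : ℝ} (hu : 0 < u) (hv : 0 < v) :
    ∫ t in Ioi (0:ℝ), t ^ (u - 1) * (1 + t) ^ (-(u + v))
      = Real.Gamma u * Real.Gamma v / Real.Gamma (u + v) := by
  rw [← image_div_one_sub_Ioo, integral_image_eq_integral_abs_deriv_smul measurableSet_Ioo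
    (fun x hx => (hasDerivAt_div_one_sub hx.2.ne).hasDerivWithinAt) injOn_div_one_sub_Ioo,
    setIntegral_congr_fun measurableSet_Ioo fun x hx => abs_inv_sq_one_sub_smul_rpow hx,
    ← integral_Ioc_eq_integral_Ioo, ← intervalIntegral.integral_of_le zero_le_one,
    integral_rpow_mul_one_sub_rpow_s11 hu hv]

theorem integrableOn_Ioi_rpow_mul_one_add_rpow {u v : ℝ} (hu : 0 < u) (hv : 0 < v) :
    IntegrableOn (fun t : ℝ => t ^ (u - 1) * (1 + t) ^ (-(u + v))) (Ioi 0) := by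
  refine Integrable.of_integral_ne_zero ?_
  rw [integral_Ioi_rpow_mul_one_add_rpow hu hv]
  have := Real.Gamma_pos_of_pos hu
  have := Real.Gamma_pos_of_pos hv
  have := Real.Gamma_pos_of_pos (add_pos hu hv)
  positivity

lemma integral_rpow_mul_one_sub_div_rpow_eq (a b e : ℝ) {s : ℝ} (hs : 0 < s) :
    ∫ u in (0:ℝ)..s, u ^ (b - 1) * (1 - u / s) ^ e * (1 + u) ^ (-a)
      = s ^ b * ∫ t in (0:ℝ)..1, t ^ (b - 1) * (1 - t) ^ e * (1 + s * t) ^ (-a) := by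
  have hscale := intervalIntegral.integral_comp_mul_left
    (fun u => u ^ (b - 1) * (1 - u / s) ^ e * (1 + u) ^ (-a)) (a := 0) (b := 1) hs.ne'
  rw [mul_zero, mul_one, smul_eq_mul, eq_inv_mul_iff_mul_eq₀ hs.ne'] at hscale
  rw [← hscale, intervalIntegral.integral_congr (g := fun t => s ^ (b - 1) *
      (t ^ (b - 1) * (1 - t) ^ e * (1 + s * t) ^ (-a))), intervalIntegral.integral_const_mul,
    ← mul_assoc, mul_comm s, ← Real.rpow_add_one hs.ne', sub_add_cancel]
  · intro t ht
    rw [uIcc_of_le zero_le_one] at ht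
    dsimp only
    rw [Real.mul_rpow hs.le ht.1, mul_div_cancel_left₀ _ hs.ne']
    ring

lemma tendsto_integral_rpow_mul_one_sub_div_rpow {a b e : ℝ} (hb : 0 < b) (hab : b < a)
    (he : 0 ≤ e) :
    Tendsto (fun s => ∫ u in (0:ℝ)..s, u ^ (b - 1) * (1 - u / s) ^ e * (1 + u) ^ (-a)) atTop
      (𝓝 (Real.Gamma b * Real.Gamma (a - b) / Real.Gamma a)) := by
  have hlim := integral_Ioi_rpow_mul_one_add_rpow hb (sub_pos.2 hab)
  have hint := integrableOn_Ioi_rpow_mul_one_add_rpow hb (sub_pos.2 hab)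
  rw [add_sub_cancel] at hlim hint
  rw [← hlim]
  set F : ℝ → ℝ → ℝ := fun s u => u ^ (b - 1) * (1 - u / s) ^ e * (1 + u) ^ (-a)
  have hF : ∀ᶠ s in atTop, ∫ u in (0:ℝ)..s, F s u = ∫ u in Ioi 0, (Ioc 0 s).indicator (F s) u := by
    filter_upwards [eventually_ge_atTop 0] with s hs
    rw [setIntegral_indicator measurableSet_Ioc, inter_eq_self_of_subset_right Ioc_subset_Ioi_self,
      intervalIntegral.integral_of_le hs]
  refine Tendsto.congr' (EventuallyEq.symm hF) ?_
  refine tendsto_integral_filter_of_dominated_convergence _ ?_ ?_ hint ?_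
  · exact Eventually.of_forall fun s =>
      ((by fun_prop : Measurable (F s)).indicator measurableSet_Ioc).aestronglyMeasurable
  · refine Eventually.of_forall fun s =>
      (ae_restrict_mem measurableSet_Ioi).mono fun u (hu : 0 < u) => ?_
    by_cases hus : u ∈ Ioc 0 s
    · have hs : 0 < s := hu.trans_le hus.2
      have hq : 0 ≤ 1 - u / s := sub_nonneg.2 (div_le_one_of_le₀ hus.2 hs.le)
      have hq1 : (1 - u / s) ^ e ≤ 1 :=
        Real.rpow_le_one hq (sub_le_self _ (by positivity)) he
      rw [indicator_of_mem hus, Real.norm_of_nonneg (by positivity)]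
      exact mul_le_mul_of_nonneg_right (mul_le_of_le_one_right (by positivity) hq1)
        (by positivity)
    · rw [indicator_of_notMem hus, norm_zero]
      positivity
  · refine (ae_restrict_mem measurableSet_Ioi).mono fun u (hu : 0 < u) => ?_
    have hq : Tendsto (fun s => (1 - u / s) ^ e) atTop (𝓝 1) := by
      simpa using (((tendsto_const_nhds (x := u)).div_atTop tendsto_id).const_sub 1).rpow_const
        (Or.inr he)
    have hFs : Tendsto (fun s => F s u) atTop (𝓝 (u ^ (b - 1) * (1 + u) ^ (-a))) := by
      simpa using (hq.const_mul (u ^ (b - 1))).mul_const ((1 + u) ^ (-a))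
    refine hFs.congr' ?_
    filter_upwards [eventually_ge_atTop u] with s hs
    rw [indicator_of_mem (show u ∈ Ioc 0 s from ⟨hu, hs⟩)]

theorem tendsto_rpow_neg_mul_gauss2F1_atBot {a b c : ℝ} (hb : 0 ≤ b) (hab : b < a)
    (hbc : b + 1 ≤ c) :
    Tendsto (fun x => (-x) ^ b * Gauss2F1 a b c x) atBot
      (𝓝 (Real.Gamma c * Real.Gamma (a - b) / (Real.Gamma (c - b) * Real.Gamma a))) := by
  have hc : 0 < Real.Gamma c := Real.Gamma_pos_of_pos (by linarith)
  have ha : 0 < Real.Gamma a := Real.Gamma_pos_of_pos (by linarith)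
  rcases hb.eq_or_lt with rfl | hb_pos
  · simp only [Gauss2F1, Real.rpow_zero, if_true, one_mul, sub_zero]
    rw [mul_comm, div_self (by positivity)]
    exact tendsto_const_nhds
  have hlim := ((tendsto_integral_rpow_mul_one_sub_div_rpow hb_pos hab
    (e := c - b - 1) (by linarith)).comp tendsto_neg_atBot_atTop).const_mul
    (Real.Gamma c / (Real.Gamma b * Real.Gamma (c - b)))
  have hcb : 0 < Real.Gamma (c - b) := Real.Gamma_pos_of_pos (by linarith)
  have hb' : 0 < Real.Gamma b := Real.Gamma_pos_of_pos hb_pos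
  rw [show Real.Gamma c / (Real.Gamma b * Real.Gamma (c - b)) *
      (Real.Gamma b * Real.Gamma (a - b) / Real.Gamma a) =
      Real.Gamma c * Real.Gamma (a - b) / (Real.Gamma (c - b) * Real.Gamma a) by
    field_simp] at hlim
  refine hlim.congr' ?_
  filter_upwards [eventually_lt_atBot 0] with x hx
  rw [Function.comp_apply, integral_rpow_mul_one_sub_div_rpow_eq a b (c - b - 1) (neg_pos.2 hx),
    Gauss2F1, if_neg hb_pos.ne']
  simp only [neg_mul, ← sub_eq_add_neg]
  ring

lemma sq_rpow_sub_one_div_two (n : ℕ) {r : ℝ} (hr : 0 < r) :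
    (r ^ 2) ^ (((n : ℝ) - 1) / 2) = r ^ n / r := by
  rw [← Real.rpow_natCast_mul hr.le, show ((2 : ℕ) : ℝ) * (((n : ℝ) - 1) / 2) = n - 1 by
    push_cast; ring, Real.rpow_sub_one hr.ne', Real.rpow_natCast]

theorem stmt11_general (d l : ℕ) (hl : 1 ≤ l)
    (f : ℝ → ℝ)
    (hf : ∀ r : ℝ, f r = r ^ l *
      (Real.Gamma (((l : ℝ) + (d : ℝ) + 1) / 2) * Real.Gamma ((l : ℝ) / 2) /
        (Real.Gamma ((l : ℝ) + (d : ℝ) / 2) * Real.Gamma (1 / 2))) *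
      Gauss2F1 ((l : ℝ) / 2) (((l : ℝ) - 1) / 2) ((l : ℝ) + (d : ℝ) / 2) (-(r ^ 2))) :
    Tendsto (fun r => f r / r) atTop (nhds 1) := by
  have hl' : (1 : ℝ) ≤ l := by exact_mod_cast hl
  have hd' : (0 : ℝ) ≤ d := d.cast_nonneg
  have hlim := ((tendsto_rpow_neg_mul_gauss2F1_atBot (a := l / 2) (b := (l - 1) / 2)
    (c := l + d / 2) (by linarith) (by linarith) (by linarith)).comp
    (tendsto_neg_atTop_atBot.comp (tendsto_pow_atTop two_ne_zero))).const_mul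
    (Real.Gamma (((l : ℝ) + (d : ℝ) + 1) / 2) * Real.Gamma ((l : ℝ) / 2) /
        (Real.Gamma ((l : ℝ) + (d : ℝ) / 2) * Real.Gamma (1 / 2)))
  have hΓ₁ := Real.Gamma_pos_of_pos (show 0 < ((l : ℝ) + d + 1) / 2 by positivity)
  have hΓ₂ := Real.Gamma_pos_of_pos (show 0 < (l : ℝ) / 2 by positivity)
  have hΓ₃ := Real.Gamma_pos_of_pos (show 0 < (l : ℝ) + d / 2 by positivity)
  have hΓ₄ := Real.Gamma_pos_of_pos (show (0 : ℝ) < 1 / 2 by norm_num)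
  rw [show (l : ℝ) / 2 - (l - 1) / 2 = 1 / 2 by ring,
    show (l : ℝ) + d / 2 - (l - 1) / 2 = (l + d + 1) / 2 by ring,
    div_mul_div_comm, mul_comm (Real.Gamma ((l : ℝ) + d / 2) * Real.Gamma (1 / 2)),
    div_self (by positivity)] at hlim
  refine hlim.congr' ?_
  filter_upwards [eventually_gt_atTop 0] with r hr
  rw [Function.comp_apply, Function.comp_apply, neg_neg, hf r, sq_rpow_sub_one_div_two l hr]
  ring

/-- For `l ≥ 1`, `d ≥ 2`, the function
`f_l(r) = r^l (Γ((l+d+1)/2)Γ(l/2)/(Γ(l+d/2)Γ(1/2))) ₂F₁(l/2,(l-1)/2;l+d/2;−r²)`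
satisfies `f_l(r)/r → 1` as `r → ∞`. -/
theorem stmt11 (d l : ℕ) (hd : 2 ≤ d) (hl : 1 ≤ l)
    (f : ℝ → ℝ)
    (hf : ∀ r : ℝ, f r = r ^ l *
      (Real.Gamma (((l : ℝ) + (d : ℝ) + 1) / 2) * Real.Gamma ((l : ℝ) / 2) /
        (Real.Gamma ((l : ℝ) + (d : ℝ) / 2) * Real.Gamma (1 / 2))) *
      Gauss2F1 ((l : ℝ) / 2) (((l : ℝ) - 1) / 2) ((l : ℝ) + (d : ℝ) / 2) (-(r ^ 2))) :
    Tendsto (fun r => f r / r) atTop (nhds 1) :=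
  stmt11_general d l hl f hf
end

section
/- For each R > 0, setting δ_R = R/√(1+R²) ∈ (0,1), there exists a constant C (depending on d) such that for all sufficiently large l, sup_{0 ≤ r ≤ R} f_l(r) ≤ C · l · R^l · (1+R²)^{−l/2}, and in particular sup_{r≤R} f_l(r) ≤ δ'^l eventually for any δ' ∈ (δ_R, 1). -/
open MeasureTheory Filter

/-!
With `v = r² / (1 + r² t)` one has `r^l (1 + r² t)^(-l/2) = v^(l/2)`, and since
`(d + l - 1)/2 ≥ (l - 3)/2` the integrand of `f_l` times `r^l` is at most
`(t (1 - t) v)^((l-3)/2) v^(3/2)`. The elementary inequality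
`t (1 - t) r² / (1 + r² t) ≤ r² / (1 + r²)` bounds this uniformly in `t` and `r ≤ R` by
`(1 + R²)^(3/2) δ_R^l`, and the Gamma ratio is at most `l` because `Γ` is increasing on
`[2, ∞)`. Any `δ' > δ_R` then absorbs the factor `l`.
-/

lemma sq_rpow_half_natCast {x : ℝ} (hx : 0 ≤ x) (l : ℕ) :
    (x ^ 2) ^ ((l : ℝ) / 2) = x ^ l := by
  rw [← Real.rpow_natCast_mul hx, Nat.cast_ofNat, mul_div_cancel₀ _ two_ne_zero,
    Real.rpow_natCast]

lemma pow_mul_rpow_neg_half {r s : ℝ} (l : ℕ) (hr : 0 ≤ r) (hs : 0 ≤ s) :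
    r ^ l * s ^ (-(l : ℝ) / 2) = (r ^ 2 / s) ^ ((l : ℝ) / 2) := by
  rw [Real.div_rpow (sq_nonneg r) hs, sq_rpow_half_natCast hr, neg_div, Real.rpow_neg hs,
    ← div_eq_mul_inv]

lemma mul_one_sub_mul_div_le {x t : ℝ} (hx : 0 ≤ x) (ht0 : 0 ≤ t) (ht1 : t ≤ 1) :
    t * (1 - t) * x / (1 + x * t) ≤ x / (1 + x) := by
  rw [div_le_div_iff₀ (by positivity) (by positivity)]
  nlinarith [mul_nonneg hx (sq_nonneg t), mul_nonneg (mul_nonneg hx hx) (sq_nonneg t),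
    mul_nonneg hx (sub_nonneg.2 ht1)]

lemma div_one_add_le_div_one_add {x y : ℝ} (hx : 0 ≤ x) (hxy : x ≤ y) :
    x / (1 + x) ≤ y / (1 + y) := by
  rw [div_le_div_iff₀ (by positivity) (by linarith)]
  linarith

noncomputable def fIntegrand (d l : ℕ) (r t : ℝ) : ℝ :=
  t ^ (((l : ℝ) - 3) / 2) * (1 - t) ^ (((d : ℝ) + (l : ℝ) - 1) / 2)
    * (1 + r ^ 2 * t) ^ (-(l : ℝ) / 2)

lemma pow_mul_fIntegrand_le {d l : ℕ} (hl : 3 ≤ l) {r R t : ℝ} (hr0 : 0 ≤ r) (hrR : r ≤ R)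
    (ht0 : 0 ≤ t) (ht1 : t ≤ 1) :
    r ^ l * fIntegrand d l r t
      ≤ (1 + R ^ 2) ^ (3 / 2 : ℝ) * (R ^ 2 / (1 + R ^ 2)) ^ ((l : ℝ) / 2) := by
  set a : ℝ := ((l : ℝ) - 3) / 2 with ha
  have hl' : (3 : ℝ) ≤ l := by exact_mod_cast hl
  have ha0 : 0 ≤ a := by rw [ha]; linarith
  have hl2 : (l : ℝ) / 2 = a + 3 / 2 := by ring
  set v := r ^ 2 / (1 + r ^ 2 * t)
  set q := R ^ 2 / (1 + R ^ 2)
  have h1t : 0 ≤ 1 - t := by linarith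
  have hv0 : 0 ≤ v := by positivity
  have hq0 : 0 ≤ q := by positivity
  have hr2 : r ^ 2 ≤ R ^ 2 := pow_le_pow_left₀ hr0 hrR 2
  have hw : t * (1 - t) * v ≤ q := by
    rw [← mul_div_assoc]
    exact (mul_one_sub_mul_div_le (sq_nonneg r) ht0 ht1).trans
      (div_one_add_le_div_one_add (sq_nonneg r) hr2)
  have hv : v ≤ q * (1 + R ^ 2) := by
    rw [div_mul_cancel₀ _ (by positivity)]
    exact (div_le_self (sq_nonneg r) (by nlinarith [mul_nonneg (sq_nonneg r) ht0])).trans hr2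
  have hpow_ne : a + 3 / 2 ≠ 0 := by positivity
  calc r ^ l * fIntegrand d l r t
      = t ^ a * (1 - t) ^ (((d : ℝ) + l - 1) / 2) * v ^ (a + 3 / 2) := by
        rw [fIntegrand, ← hl2, ← pow_mul_rpow_neg_half l hr0 (by positivity)]; ring
    _ ≤ t ^ a * (1 - t) ^ a * v ^ (a + 3 / 2) := by
        gcongr t ^ a * ?_ * _
        exact Real.rpow_le_rpow_of_exponent_ge' h1t (by linarith) ha0
          (by rw [ha]; linarith [d.cast_nonneg (α := ℝ)])
    _ = (t * (1 - t) * v) ^ a * v ^ (3 / 2 : ℝ) := by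
        rw [Real.rpow_add' hv0 hpow_ne, Real.mul_rpow (by positivity) hv0, Real.mul_rpow ht0 h1t]
        ring
    _ ≤ q ^ a * (q * (1 + R ^ 2)) ^ (3 / 2 : ℝ) := by gcongr
    _ = (1 + R ^ 2) ^ (3 / 2 : ℝ) * q ^ ((l : ℝ) / 2) := by
        rw [hl2, Real.mul_rpow hq0 (by positivity), ← mul_assoc, ← Real.rpow_add' hq0 hpow_ne]
        ring

lemma pow_mul_integral_fIntegrand_le {d l : ℕ} (hl : 3 ≤ l) {r R : ℝ} (hr0 : 0 ≤ r)
    (hrR : r ≤ R) :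
    r ^ l * ∫ t in (0 : ℝ)..1, fIntegrand d l r t
      ≤ (1 + R ^ 2) ^ (3 / 2 : ℝ) * (R ^ 2 / (1 + R ^ 2)) ^ ((l : ℝ) / 2) := by
  set C := (1 + R ^ 2) ^ (3 / 2 : ℝ) * (R ^ 2 / (1 + R ^ 2)) ^ ((l : ℝ) / 2)
  have hbound : ∀ t ∈ Set.uIoc (0 : ℝ) 1, ‖r ^ l * fIntegrand d l r t‖ ≤ C := by
    intro t ht
    obtain ⟨ht0, ht1⟩ : t ∈ Set.Ioc 0 1 := by rwa [Set.uIoc_of_le zero_le_one] at ht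
    have hF : 0 ≤ fIntegrand d l r t := by
      have : 0 ≤ 1 - t := by linarith
      unfold fIntegrand
      positivity
    rw [Real.norm_eq_abs, abs_of_nonneg (mul_nonneg (pow_nonneg hr0 l) hF)]
    exact pow_mul_fIntegrand_le hl hr0 hrR ht0.le ht1
  calc r ^ l * ∫ t in (0 : ℝ)..1, fIntegrand d l r t
      = ∫ t in (0 : ℝ)..1, r ^ l * fIntegrand d l r t :=
        (intervalIntegral.integral_const_mul _ _).symm
    _ ≤ ‖∫ t in (0 : ℝ)..1, r ^ l * fIntegrand d l r t‖ := Real.le_norm_self _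
    _ ≤ C * |1 - 0| := intervalIntegral.norm_integral_le_of_norm_le_const hbound
    _ = C := by rw [sub_zero, abs_one, mul_one]

lemma Real.Gamma_add_half_le_mul_Gamma {x : ℝ} (hx : 3 / 2 ≤ x) :
    Gamma (x + 1 / 2) ≤ x * Gamma x := by
  rw [← Real.Gamma_add_one (by positivity)]
  exact Real.Gamma_strictMonoOn_Ici.monotoneOn (by simp; linarith) (by simp; linarith)
    (by linarith)

lemma Real.Gamma_div_Gamma_mul_Gamma_one_half_le {l : ℝ} (hl : 4 ≤ l) :
    Gamma (l / 2) / (Gamma ((l - 1) / 2) * Gamma (1 / 2)) ≤ l := by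
  have hΓ : 0 < Gamma ((l - 1) / 2) := Gamma_pos_of_pos (by linarith)
  have hΓhalf : 1 ≤ Gamma (1 / 2) := by
    rw [Gamma_one_half_eq, one_le_sqrt]; linarith [pi_gt_three]
  have hstep := Gamma_add_half_le_mul_Gamma (x := (l - 1) / 2) (by linarith)
  rw [show (l - 1) / 2 + 1 / 2 = l / 2 by ring] at hstep
  rw [div_le_iff₀ (by positivity)]
  calc Gamma (l / 2) ≤ (l - 1) / 2 * Gamma ((l - 1) / 2) := hstep
    _ ≤ l * Gamma ((l - 1) / 2) := by gcongr; linarith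
    _ ≤ l * (Gamma ((l - 1) / 2) * Gamma (1 / 2)) := by
      gcongr; exact le_mul_of_one_le_right hΓ.le hΓhalf

lemma eventually_mul_natCast_mul_pow_le_pow (C : ℝ) {ρ δ : ℝ} (h : |ρ| < δ) :
    ∀ᶠ l : ℕ in atTop, C * l * ρ ^ l ≤ δ ^ l := by
  have := ((isLittleO_pow_const_mul_const_pow_const_pow_of_norm_lt 1 h).const_mul_left C).bound
    zero_lt_one
  filter_upwards [this] with l hl
  have hδ : 0 ≤ δ := (abs_nonneg ρ).trans h.le
  simp only [pow_one, Real.norm_eq_abs, one_mul, abs_pow, abs_of_nonneg hδ] at hl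
  rw [← mul_assoc] at hl
  exact (le_abs_self _).trans hl

theorem stmt12_general (d : ℕ) (R : ℝ) (hR : 0 < R)
    (f : ℕ → ℝ → ℝ)
    (hf : ∀ l : ℕ, 2 ≤ l → ∀ r : ℝ, 0 ≤ r → f l r =
      r ^ l * (Real.Gamma ((l : ℝ) / 2) / (Real.Gamma (((l : ℝ) - 1) / 2) * Real.Gamma (1 / 2))) *
        ∫ t in (0:ℝ)..1, t ^ (((l : ℝ) - 3) / 2) * (1 - t) ^ (((d : ℝ) + (l : ℝ) - 1) / 2)
          * (1 + r ^ 2 * t) ^ (-(l : ℝ) / 2)) :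
    (∃ C : ℝ, ∀ᶠ l : ℕ in atTop, ∀ r ∈ Set.Icc (0 : ℝ) R,
        f l r ≤ C * l * R ^ l * (1 + R ^ 2) ^ (-(l : ℝ) / 2))
      ∧ ∀ δ' : ℝ, R / Real.sqrt (1 + R ^ 2) < δ' → δ' < 1 →
          ∀ᶠ l : ℕ in atTop, ∀ r ∈ Set.Icc (0 : ℝ) R, f l r ≤ δ' ^ l := by
  set C := (1 + R ^ 2) ^ (3 / 2 : ℝ)
  set q := R ^ 2 / (1 + R ^ 2)
  have hbound : ∀ l ≥ 4, ∀ r ∈ Set.Icc 0 R, f l r ≤ C * l * q ^ ((l : ℝ) / 2) := by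
    rintro l hl r ⟨hr0, hrR⟩
    have hl' : (4 : ℝ) ≤ l := by exact_mod_cast hl
    rw [hf l (by omega) r hr0, mul_comm (r ^ l), mul_assoc, mul_comm C, mul_assoc]
    calc _ ≤ _ * (C * q ^ ((l : ℝ) / 2)) :=
          mul_le_mul_of_nonneg_left (pow_mul_integral_fIntegrand_le (d := d) (by omega) hr0 hrR)
            (div_nonneg (by positivity)
              (mul_nonneg (Real.Gamma_nonneg_of_nonneg (by linarith)) (by positivity)))
      _ ≤ _ := mul_le_mul_of_nonneg_right (Real.Gamma_div_Gamma_mul_Gamma_one_half_le hl')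
            (by positivity)
  refine ⟨⟨C, ?_⟩, fun δ' hδ' _ => ?_⟩
  · filter_upwards [eventually_ge_atTop 4] with l hl r hr
    rw [mul_assoc (C * l), pow_mul_rpow_neg_half l hR.le (by positivity)]
    exact hbound l hl r hr
  · have hq (l : ℕ) : q ^ ((l : ℝ) / 2) = (R / Real.sqrt (1 + R ^ 2)) ^ l := by
      rw [← sq_rpow_half_natCast (by positivity), div_pow, Real.sq_sqrt (by positivity)]
    have hδ'abs : |R / Real.sqrt (1 + R ^ 2)| < δ' := by rwa [abs_of_nonneg (by positivity)]
    filter_upwards [eventually_ge_atTop 4, eventually_mul_natCast_mul_pow_le_pow C hδ'abs]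
      with l hl hlδ r hr
    exact (hbound l hl r hr).trans (by rwa [hq])

/-- Geometric decay of `sup_{r ≤ R} f_l(r)` as `l → ∞`: with
`δ_R = R/√(1+R²)`, one has `sup_{0≤r≤R} f_l(r) ≤ C l R^l (1+R²)^(-l/2)` for large `l`,
and hence `sup_{r≤R} f_l(r) ≤ δ'^l` eventually, for any `δ' ∈ (δ_R, 1)`. -/
theorem stmt12 (d : ℕ) (hd : 2 ≤ d) (R : ℝ) (hR : 0 < R)
    (f : ℕ → ℝ → ℝ)
    (hf : ∀ l : ℕ, 2 ≤ l → ∀ r : ℝ, 0 ≤ r → f l r =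
      r ^ l * (Real.Gamma ((l : ℝ) / 2) / (Real.Gamma (((l : ℝ) - 1) / 2) * Real.Gamma (1 / 2))) *
        ∫ t in (0:ℝ)..1, t ^ (((l : ℝ) - 3) / 2) * (1 - t) ^ (((d : ℝ) + (l : ℝ) - 1) / 2)
          * (1 + r ^ 2 * t) ^ (-(l : ℝ) / 2)) :
    (∃ C : ℝ, ∀ᶠ l : ℕ in atTop, ∀ r ∈ Set.Icc (0 : ℝ) R,
        f l r ≤ C * l * R ^ l * (1 + R ^ 2) ^ (-(l : ℝ) / 2))
      ∧ ∀ δ' : ℝ, R / Real.sqrt (1 + R ^ 2) < δ' → δ' < 1 →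
          ∀ᶠ l : ℕ in atTop, ∀ r ∈ Set.Icc (0 : ℝ) R, f l r ≤ δ' ^ l :=
  stmt12_general d R hR f hf
end

section
/- Suppose u : ℝ^d → ℝ is continuous, u(0) = 0, and for every 0 < r < |x| one has |u(x)| ≤ sup_{|y|=r} |u(y)| + ((h(|x|) − h(r))/(h(R) − h(r))) · sup_{|y|=R} |u(y)| for all R > |x|, where h(r) = ∫₁^r ((1+u²)/u²)^{(d−1)/2} du. If additionally sup_{θ∈S^{d−1}} |u(Rθ)|/R → 0 as R → ∞, then u ≡ 0. -/
/-!
As `R → ∞` the weight `(h(‖x‖) - h(r)) / (h(R) - h(r))` decays like `1 / R`, because the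
integrand defining `h` is at least `1`; since `sup_{‖y‖=R} |u y| = o(R)`, the second term of the
estimate vanishes in the limit, leaving `|u x| ≤ sup_{‖y‖=r} |u y|` for every `0 < r < ‖x‖`.
Letting `r → 0` and using continuity of `u` at `0 = u 0` gives `u x = 0`.
-/

open MeasureTheory Filter Topology

lemma sub_one_le_integral_one_add_sq_div_sq_rpow {p R : ℝ} (hp : 0 ≤ p) (hR : 1 ≤ R) :
    R - 1 ≤ ∫ s in (1 : ℝ)..R, ((1 + s ^ 2) / s ^ 2) ^ p := by
  have hcont : ContinuousOn (fun s : ℝ => ((1 + s ^ 2) / s ^ 2) ^ p) (Set.uIcc 1 R) := by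
    refine ContinuousOn.rpow_const (ContinuousOn.div (by fun_prop) (by fun_prop) ?_) ?_
    · intro s hs
      have : 0 < s := by rw [Set.uIcc_of_le hR] at hs; linarith [hs.1]
      positivity
    · exact fun _ _ => Or.inr hp
  have hone : ∀ s ∈ Set.Icc 1 R, (1 : ℝ) ≤ ((1 + s ^ 2) / s ^ 2) ^ p := by
    intro s hs
    have hs2 : 0 < s ^ 2 := by nlinarith [hs.1]
    exact Real.one_le_rpow ((one_le_div hs2).2 (by linarith)) hp
  simpa using intervalIntegral.integral_mono_on hR (intervalIntegrable_const (μ := volume))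
    hcont.intervalIntegrable hone

section SphereSup

variable {E : Type*} [NormedAddCommGroup E]

/-- `sup_{‖y‖ = R} |u y|`; it is `sSup ∅ = 0` when the sphere is empty. -/
noncomputable def sphereSup (u : E → ℝ) (R : ℝ) : ℝ :=
  sSup ((fun y => |u y|) '' Metric.sphere (0 : E) R)

lemma sphereSup_nonneg (u : E → ℝ) (R : ℝ) : 0 ≤ sphereSup u R :=
  Real.sSup_nonneg <| by rintro _ ⟨y, -, rfl⟩; exact abs_nonneg _

lemma sphereSup_le {u : E → ℝ} {R ε : ℝ} (hε : 0 ≤ ε)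
    (hu : ∀ y ∈ Metric.sphere (0 : E) R, |u y| ≤ ε) : sphereSup u R ≤ ε :=
  Real.sSup_le (by rintro _ ⟨y, hy, rfl⟩; exact hu y hy) hε

lemma tendsto_sphereSup_nhdsGT_zero {u : E → ℝ} (hu : ContinuousAt u 0) (hu0 : u 0 = 0) :
    Tendsto (sphereSup u) (𝓝[>] 0) (𝓝 0) := by
  refine Metric.nhds_basis_closedBall.tendsto_right_iff.2 fun ε hε => ?_
  have hsmall : ∀ᶠ y in 𝓝 (0 : E), |u y| ≤ ε := by
    simpa [hu0] using Metric.nhds_basis_closedBall.tendsto_right_iff.1 hu ε hε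
  obtain ⟨δ, hδ, hball⟩ := Metric.eventually_nhds_iff_ball.1 hsmall
  filter_upwards [Ioo_mem_nhdsGT hδ] with r hr
  rw [Metric.mem_closedBall, dist_zero_right, Real.norm_of_nonneg (sphereSup_nonneg u r)]
  refine sphereSup_le hε.le fun y hy => hball y ?_
  rw [mem_sphere_zero_iff_norm] at hy
  rw [mem_ball_zero_iff, hy]
  exact hr.2

end SphereSup

lemma tendsto_div_sub_mul_of_tendsto_div_atTop {g M : ℝ → ℝ}
    (hg : ∀ᶠ R in atTop, R - 1 ≤ g R) (hM : Tendsto (fun R => M R / R) atTop (𝓝 0))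
    (c b : ℝ) : Tendsto (fun R => c / (g R - b) * M R) atTop (𝓝 0) := by
  -- `c / (g R - b) * M R = (M R / R) * (c R / (g R - b))`, and `g R - b ≥ R / 2` for large `R`.
  have hbdd : IsBoundedUnder (· ≤ ·) atTop (norm ∘ fun R => c * R / (g R - b)) := by
    refine isBoundedUnder_of_eventually_le (a := 2 * |c|) ?_
    filter_upwards [hg, eventually_ge_atTop (2 * (1 + |b|))] with R hgR hR
    have hb : b ≤ |b| := le_abs_self b
    have hden : R / 2 ≤ g R - b := by linarith
    have hR0 : 0 < R := by linarith [abs_nonneg b]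
    have hden0 : 0 < g R - b := by linarith
    rw [Function.comp_apply, Real.norm_eq_abs, abs_div, abs_mul, abs_of_pos hR0,
      abs_of_pos hden0, div_le_iff₀ hden0]
    nlinarith [abs_nonneg c]
  refine (hM.zero_mul_isBoundedUnder_le hbdd).congr' ?_
  filter_upwards [eventually_gt_atTop 0] with R hR
  field_simp

theorem eq_zero_of_abs_le_sphereSup_add {E : Type*} [NormedAddCommGroup E] {u : E → ℝ}
    (hu : ContinuousAt u 0) (hu0 : u 0 = 0) {g : ℝ → ℝ} (hg : ∀ᶠ R in atTop, R - 1 ≤ g R)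
    (hmax : ∀ x : E, ∀ r R : ℝ, 0 < r → r < ‖x‖ → ‖x‖ < R →
      |u x| ≤ sphereSup u r + (g ‖x‖ - g r) / (g R - g r) * sphereSup u R)
    (hlim : Tendsto (fun R => sphereSup u R / R) atTop (𝓝 0)) (x : E) : u x = 0 := by
  rcases eq_or_ne x 0 with rfl | hx
  · exact hu0
  have hsphere : ∀ r ∈ Set.Ioo 0 ‖x‖, |u x| ≤ sphereSup u r := by
    rintro r ⟨hr, hrx⟩
    have hrest := (tendsto_div_sub_mul_of_tendsto_div_atTop hg hlim (g ‖x‖ - g r) (g r)).const_add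
      (sphereSup u r)
    rw [add_zero] at hrest
    exact ge_of_tendsto hrest <| (eventually_gt_atTop ‖x‖).mono fun R hR => hmax x r R hr hrx hR
  have hx0 : |u x| ≤ 0 := ge_of_tendsto (tendsto_sphereSup_nhdsGT_zero hu hu0)
    (eventually_of_mem (Ioo_mem_nhdsGT (norm_pos_iff.2 hx)) hsphere)
  exact abs_nonpos_iff.1 hx0

/-- Uniqueness via the maximum-principle estimate: if a continuous `u` with `u(0) = 0`
satisfies `|u(x)| ≤ sup_{|y|=r}|u(y)| + ((h(|x|)-h(r))/(h(R)-h(r))) sup_{|y|=R}|u(y)|`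
for all `0 < r < |x| < R`, and `sup_{|y|=R}|u(y)|/R → 0`, then `u ≡ 0`. -/
theorem stmt14 (d : ℕ) (hd : 2 ≤ d)
    (h : ℝ → ℝ)
    (hh : ∀ r : ℝ, h r = ∫ u in (1:ℝ)..r, ((1 + u ^ 2) / u ^ 2) ^ (((d : ℝ) - 1) / 2))
    (u : EuclideanSpace ℝ (Fin d) → ℝ) (hu : Continuous u) (hu0 : u 0 = 0)
    (hmax : ∀ x : EuclideanSpace ℝ (Fin d), ∀ r R : ℝ, 0 < r → r < ‖x‖ → ‖x‖ < R →
      |u x| ≤ sSup ((fun y => |u y|) '' Metric.sphere (0 : EuclideanSpace ℝ (Fin d)) r)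
        + ((h ‖x‖ - h r) / (h R - h r)) *
            sSup ((fun y => |u y|) '' Metric.sphere (0 : EuclideanSpace ℝ (Fin d)) R))
    (hlim : Tendsto (fun R : ℝ =>
        sSup ((fun y => |u y|) '' Metric.sphere (0 : EuclideanSpace ℝ (Fin d)) R) / R)
      atTop (nhds 0)) :
    ∀ x, u x = 0 := by
  have hp : (0 : ℝ) ≤ ((d : ℝ) - 1) / 2 := by
    have : (2 : ℝ) ≤ d := by exact_mod_cast hd
    linarith
  have hgrowth : ∀ᶠ R in atTop, R - 1 ≤ h R := (eventually_ge_atTop 1).mono fun R hR =>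
    (hh R).symm ▸ sub_one_le_integral_one_add_sq_div_sq_rpow hp hR
  exact eq_zero_of_abs_le_sphereSup_add hu.continuousAt hu0 hgrowth hmax hlim
end

section
/- There exist constants A, B (depending on d) such that the function f̂₀(r) = r − f₀(r) satisfies |f̂₀(r)| ≤ A + B log(1+r) for all r ≥ 0, where f₀(r) = 2γ_d ∫₀^r ((1+u²)/u²)^{(d−1)/2} ∫₀^u v^{d−1}/(1+v²)^{(d+1)/2} dv du. -/
/-!
Write `φ(v) = v^(d-1) / (1+v²)^((d+1)/2)` (`density`), `w(u) = ((1+u²)/u²)^((d-1)/2)` (`weight`)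
and `g(u) = w(u) ∫₀^u φ` (`profile`), so that `r - f₀(r) = ∫₀^r (1 - 2γ_d g(u)) du`. The
substitution `v = tan θ` turns `∫₀^∞ φ` into the Wallis integral `∫₀^{π/2} sin^(d-1)`, which is
`1/(2γ_d)`. Hence `|1 - 2γ_d g(u)| = O(1/(1+u))`, which integrates to `O(log(1+r))`: for `u ≥ 1`
because `w(u) = 1 + O(1/u)` and `∫_u^∞ φ ≤ ∫_u^∞ v⁻² = 1/u`; for small `u` because `w` is
decreasing and `w(v) φ(v) = 1/(1+v²)`, so that `g(u) ≤ ∫₀^u dv/(1+v²) = arctan u`.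
-/

open MeasureTheory Real intervalIntegral Set

theorem integral_sin_pow_zero_pi_div_two (n : ℕ) :
    ∫ x in (0:ℝ)..π / 2, sin x ^ n = √π / 2 * (Gamma ((n + 1) / 2) / Gamma (n / 2 + 1)) := by
  induction n using Nat.twoStepInduction with
  | zero =>
    norm_num [Gamma_one_half_eq]
    rw [div_mul_eq_mul_div, mul_self_sqrt pi_pos.le]
  | one =>
    have h : Gamma (3 / 2) = √π / 2 := by
      rw [show (3:ℝ) / 2 = 1 / 2 + 1 by norm_num, Gamma_add_one (by norm_num), Gamma_one_half_eq]
      ring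
    norm_num [h]
    field_simp
  | more n ih _ =>
    have ha : 0 < ((n:ℝ) + 1) / 2 := by positivity
    have hb : 0 < (n:ℝ) / 2 + 1 := by positivity
    rw [integral_sin_pow, ih]
    push_cast
    rw [show ((n:ℝ) + 2 + 1) / 2 = ((n:ℝ) + 1) / 2 + 1 by ring, Gamma_add_one ha.ne',
      show ((n:ℝ) + 2) / 2 + 1 = ((n:ℝ) / 2 + 1) + 1 by ring, Gamma_add_one hb.ne']
    have := (Gamma_pos_of_pos hb).ne'
    simp only [sin_zero, cos_pi_div_two]
    field_simp
    ring

theorem one_add_pow_le_one_add_mul (n : ℕ) {x : ℝ} (hx₀ : 0 ≤ x) (hx₁ : x ≤ 1) :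
    (1 + x) ^ n ≤ 1 + (2 ^ n - 1) * x := by
  have h := (convexOn_pow n).2 (mem_Ici.2 zero_le_one) (mem_Ici.2 zero_le_two)
    (sub_nonneg.2 hx₁) hx₀ (by ring)
  simp only [smul_eq_mul, one_pow, mul_one] at h
  calc (1 + x) ^ n = (1 - x + x * 2) ^ n := by ring
    _ ≤ 1 - x + x * 2 ^ n := h
    _ = 1 + (2 ^ n - 1) * x := by ring

namespace RadialProfile

noncomputable def density (d : ℕ) (v : ℝ) : ℝ :=
  v ^ ((d : ℝ) - 1) / (1 + v ^ 2) ^ (((d : ℝ) + 1) / 2)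

noncomputable def weight (d : ℕ) (u : ℝ) : ℝ := ((1 + u ^ 2) / u ^ 2) ^ (((d : ℝ) - 1) / 2)

noncomputable def profile (d : ℕ) (u : ℝ) : ℝ := weight d u * ∫ v in (0:ℝ)..u, density d v

variable {d : ℕ} {c : ℝ}

theorem sub_one_div_two_nonneg (hd : 1 ≤ d) : (0:ℝ) ≤ ((d : ℝ) - 1) / 2 := by
  have : (1:ℝ) ≤ d := by exact_mod_cast hd
  linarith

theorem density_nonneg (d : ℕ) {v : ℝ} (hv : 0 ≤ v) : 0 ≤ density d v := by
  unfold density; positivity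

theorem continuous_density (hd : 1 ≤ d) : Continuous (density d) := by
  have hd' : (0:ℝ) ≤ d - 1 := by rw [sub_nonneg]; exact_mod_cast hd
  refine Continuous.div (continuous_id.rpow_const fun _ => Or.inr hd')
    ((continuous_const.add (continuous_pow 2)).rpow_const fun _ => Or.inr (by positivity))
    fun v => (rpow_pos_of_pos (by positivity) _).ne'

theorem density_le_rpow_neg_two (d : ℕ) {v : ℝ} (hv : 0 < v) : density d v ≤ v ^ (-2 : ℝ) := by
  have hden : v ^ ((d : ℝ) + 1) ≤ (1 + v ^ 2) ^ (((d : ℝ) + 1) / 2) := by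
    rw [show v ^ ((d : ℝ) + 1) = (v ^ 2) ^ (((d : ℝ) + 1) / 2) by
      rw [← rpow_natCast, ← rpow_mul hv.le]; norm_num; ring_nf]
    exact rpow_le_rpow (by positivity) (by linarith) (by positivity)
  calc density d v ≤ v ^ ((d : ℝ) - 1) / v ^ ((d : ℝ) + 1) :=
        div_le_div_of_nonneg_left (by positivity) (by positivity) hden
    _ = v ^ (-2 : ℝ) := by rw [← rpow_sub hv]; ring_nf

theorem integrableOn_density_Ioi (hd : 1 ≤ d) : IntegrableOn (density d) (Ioi 0) := by
  rw [← Ioc_union_Ioi_eq_Ioi zero_le_one]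
  refine ((continuous_density hd).integrableOn_Ioc).union
    ((integrableOn_Ioi_rpow_of_lt (by norm_num : (-2:ℝ) < -1) zero_lt_one).mono'
      (continuous_density hd).aestronglyMeasurable.restrict ?_)
  filter_upwards [ae_restrict_mem measurableSet_Ioi] with v (hv : 1 < v)
  rw [norm_of_nonneg (density_nonneg d (by linarith))]
  exact density_le_rpow_neg_two d (by linarith)

theorem setIntegral_density_Ioi_le (hd : 1 ≤ d) {u : ℝ} (hu : 0 < u) :
    ∫ v in Ioi u, density d v ≤ 1 / u := by
  calc ∫ v in Ioi u, density d v ≤ ∫ v in Ioi u, v ^ (-2 : ℝ) :=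
        setIntegral_mono_on ((integrableOn_density_Ioi hd).mono_set (Ioi_subset_Ioi hu.le))
          (integrableOn_Ioi_rpow_of_lt (by norm_num) hu) measurableSet_Ioi
          fun v hv => density_le_rpow_neg_two d (hu.trans hv)
    _ = 1 / u := by
        rw [integral_Ioi_rpow_of_lt (by norm_num) hu]; norm_num [rpow_neg_one]

theorem setIntegral_density_Ioi_nonneg (d : ℕ) {u : ℝ} (hu : 0 ≤ u) :
    0 ≤ ∫ v in Ioi u, density d v :=
  setIntegral_nonneg measurableSet_Ioi fun _ hv => density_nonneg d (hu.trans hv.le)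

theorem nonneg_of_mul_setIntegral_density_eq_one (hc : c * ∫ v in Ioi 0, density d v = 1) :
    0 ≤ c := by
  have := setIntegral_density_Ioi_nonneg d le_rfl
  nlinarith

theorem integral_density_eq_sub (hd : 1 ≤ d) {u : ℝ} (hu : 0 ≤ u) :
    ∫ v in (0:ℝ)..u, density d v = (∫ v in Ioi 0, density d v) - ∫ v in Ioi u, density d v := by
  rw [integral_of_le hu, eq_sub_iff_add_eq, ← setIntegral_union (Ioc_disjoint_Ioi le_rfl)
    measurableSet_Ioi ((integrableOn_density_Ioi hd).mono_set Ioc_subset_Ioi_self)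
    ((integrableOn_density_Ioi hd).mono_set (Ioi_subset_Ioi hu)), Ioc_union_Ioi_eq_Ioi hu]

theorem abs_inv_cos_sq_mul_density_tan (hd : 1 ≤ d) {x : ℝ} (hx : x ∈ Ioo 0 (π / 2)) :
    |1 / cos x ^ 2| * density d (tan x) = sin x ^ (d - 1) := by
  have hc : 0 < cos x := cos_pos_of_mem_Ioo ⟨by linarith [hx.1, pi_pos], hx.2⟩
  have hs : 0 < sin x := sin_pos_of_pos_of_lt_pi hx.1 (by linarith [hx.2, pi_pos])
  have hsec : 1 + tan x ^ 2 = (cos x ^ 2)⁻¹ := by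
    rw [tan_eq_sin_div_cos]; field_simp; linarith [sin_sq_add_cos_sq x]
  have hcos : (cos x ^ 2) ^ (((d : ℝ) + 1) / 2) = cos x ^ ((d : ℝ) - 1) * cos x ^ 2 := by
    rw [← rpow_natCast, ← rpow_mul hc.le, ← rpow_add hc]; ring_nf
  have hsin : sin x ^ ((d : ℝ) - 1) = sin x ^ (d - 1) := by
    rw [← rpow_natCast, Nat.cast_sub hd, Nat.cast_one]
  rw [abs_of_pos (by positivity), density, hsec, inv_rpow (by positivity), hcos,
    tan_eq_sin_div_cos, div_rpow hs.le hc.le, hsin]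
  have := (rpow_pos_of_pos hc ((d : ℝ) - 1)).ne'
  field_simp

theorem integral_density_Ioi (hd : 1 ≤ d) :
    ∫ v in Ioi 0, density d v = √π / 2 * (Gamma (d / 2) / Gamma ((d + 1) / 2)) := by
  have hsub : Ioo 0 (π / 2) ⊆ Ioo (-(π / 2)) (π / 2) :=
    Ioo_subset_Ioo_left (by linarith [pi_pos])
  have himage : tan '' Ioo 0 (π / 2) = Ioi 0 := by
    refine Subset.antisymm
      (image_subset_iff.2 fun x hx => tan_pos_of_pos_of_lt_pi_div_two hx.1 hx.2)
      fun y (hy : 0 < y) => ⟨arctan y, ⟨arctan_pos.2 hy, arctan_lt_pi_div_two y⟩, tan_arctan y⟩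
  have hderiv (x : ℝ) (hx : x ∈ Ioo 0 (π / 2)) :
      HasDerivWithinAt tan (1 / cos x ^ 2) (Ioo 0 (π / 2)) x :=
    (hasDerivAt_tan (cos_pos_of_mem_Ioo (hsub hx)).ne').hasDerivWithinAt
  rw [← himage, integral_image_eq_integral_abs_deriv_smul measurableSet_Ioo hderiv
    (injOn_tan.mono hsub)]
  simp only [smul_eq_mul]
  rw [setIntegral_congr_fun measurableSet_Ioo
    fun x hx => abs_inv_cos_sq_mul_density_tan hd hx, ← integral_Ioc_eq_integral_Ioo,
    ← integral_of_le (by positivity), integral_sin_pow_zero_pi_div_two, Nat.cast_sub hd]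
  push_cast
  ring_nf

theorem weight_mul_density {v : ℝ} (hv : 0 < v) : weight d v * density d v = (1 + v ^ 2)⁻¹ := by
  have hv2 : v ^ ((d : ℝ) - 1) = (v ^ 2) ^ (((d : ℝ) - 1) / 2) := by
    rw [← rpow_natCast, ← rpow_mul hv.le]; ring_nf
  have hsplit : (1 + v ^ 2) ^ (((d : ℝ) + 1) / 2) =
      (1 + v ^ 2) ^ (((d : ℝ) - 1) / 2) * (1 + v ^ 2) := by
    rw [← rpow_add_one (by positivity)]; ring_nf
  rw [weight, density, hv2, hsplit, div_rpow (by positivity) (by positivity)]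
  have := (rpow_pos_of_pos (by positivity : 0 < v ^ 2) (((d : ℝ) - 1) / 2)).ne'
  have := (rpow_pos_of_pos (by positivity : 0 < 1 + v ^ 2) (((d : ℝ) - 1) / 2)).ne'
  field_simp

theorem weight_le_weight (hd : 1 ≤ d) {u v : ℝ} (hv : 0 < v) (hvu : v ≤ u) :
    weight d u ≤ weight d v := by
  have hu := hv.trans_le hvu
  refine rpow_le_rpow (by positivity) ?_ (sub_one_div_two_nonneg hd)
  rw [add_div, add_div, div_self (by positivity), div_self (by positivity)]
  gcongr

theorem profile_nonneg (d : ℕ) {u : ℝ} (hu : 0 ≤ u) : 0 ≤ profile d u :=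
  mul_nonneg (rpow_nonneg (by positivity) _)
    (integral_nonneg hu fun v hv => density_nonneg d hv.1)

theorem profile_le_arctan (hd : 1 ≤ d) {u : ℝ} (hu : 0 < u) : profile d u ≤ arctan u := by
  have hcont := continuous_density hd
  calc profile d u = ∫ v in (0:ℝ)..u, weight d u * density d v :=
        (intervalIntegral.integral_const_mul _ _).symm
    _ ≤ ∫ v in (0:ℝ)..u, (1 + v ^ 2)⁻¹ := by
        refine integral_mono_on_of_le_Ioo hu.le ((hcont.intervalIntegrable 0 u).const_mul _)
          intervalIntegrable_inv_one_add_sq fun v hv => ?_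
        rw [← weight_mul_density hv.1]
        exact mul_le_mul_of_nonneg_right (weight_le_weight hd hv.1 hv.2.le)
          (density_nonneg d hv.1.le)
    _ = arctan u := by rw [integral_inv_one_add_sq, arctan_zero, sub_zero]

theorem one_le_weight (hd : 1 ≤ d) {u : ℝ} (hu : 0 < u) : 1 ≤ weight d u := by
  refine one_le_rpow ?_ (sub_one_div_two_nonneg hd)
  rw [one_le_div (by positivity)]
  linarith

theorem weight_le (hd : 1 ≤ d) {u : ℝ} (hu : 1 ≤ u) : weight d u ≤ 1 + (2 ^ d - 1) / u := by
  have hu0 : 0 < u := one_pos.trans_le hu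
  have hbase : (1 + u ^ 2) / u ^ 2 ≤ 1 + 1 / u := by
    rw [add_div, div_self (by positivity), add_comm, add_le_add_iff_left]
    exact one_div_le_one_div_of_le hu0 (by nlinarith)
  have hx : 1 / u ≤ 1 := by rw [div_le_one hu0]; exact hu
  calc weight d u ≤ (1 + 1 / u) ^ (d : ℝ) := by
        refine (rpow_le_rpow (by positivity) hbase (sub_one_div_two_nonneg hd)).trans
          (rpow_le_rpow_of_exponent_le (by linarith [one_div_pos.2 hu0]) (by linarith))
    _ ≤ 1 + (2 ^ d - 1) * (1 / u) := by
        rw [rpow_natCast]; exact one_add_pow_le_one_add_mul d (by positivity) hx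
    _ = 1 + (2 ^ d - 1) / u := by ring

theorem abs_one_sub_mul_profile_le_of_one_le (hd : 1 ≤ d)
    (hc : c * ∫ v in Ioi 0, density d v = 1) {u : ℝ} (hu : 1 ≤ u) :
    |1 - c * profile d u| ≤ (c + 2 ^ d) / u := by
  have hu0 : 0 < u := one_pos.trans_le hu
  have hc0 := nonneg_of_mul_setIntegral_density_eq_one hc
  set t := ∫ v in Ioi u, density d v
  have ht0 : 0 ≤ t := setIntegral_density_Ioi_nonneg d hu0.le
  have ht1 : t ≤ 1 / u := setIntegral_density_Ioi_le hd hu0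
  have hI : c * ∫ v in (0:ℝ)..u, density d v = 1 - c * t := by
    rw [integral_density_eq_sub hd hu0.le, mul_sub, hc]
  have hI0 : 0 ≤ 1 - c * t :=
    hI ▸ mul_nonneg hc0 (integral_nonneg hu0.le fun v hv => density_nonneg d hv.1)
  have hw1 := one_le_weight hd hu0
  have hw2 := weight_le hd hu
  have hct : c * t ≤ c / u := by
    calc c * t ≤ c * (1 / u) := mul_le_mul_of_nonneg_left ht1 hc0
      _ = c / u := by ring
  have hsplit : c * profile d u = weight d u * (c * ∫ v in (0:ℝ)..u, density d v) := by
    rw [profile]; ring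
  rw [hsplit, abs_le, hI]
  constructor
  · have : weight d u * (1 - c * t) ≤ weight d u :=
      mul_le_of_le_one_right (by linarith) (by linarith [mul_nonneg hc0 ht0])
    have : (2 ^ d - 1) / u ≤ (c + 2 ^ d) / u := by gcongr; linarith
    linarith
  · have : 1 - c * t ≤ weight d u * (1 - c * t) := le_mul_of_one_le_left hI0 hw1
    have : c / u ≤ (c + 2 ^ d) / u := by gcongr; linarith [pow_pos (two_pos : (0:ℝ) < 2) d]
    linarith

theorem abs_one_sub_mul_profile_le (hd : 1 ≤ d) (hc : c * ∫ v in Ioi 0, density d v = 1)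
    {u : ℝ} (hu : 0 < u) : |1 - c * profile d u| ≤ 2 * (1 + 2 * c + 2 ^ d) / (1 + u) := by
  have hc0 := nonneg_of_mul_setIntegral_density_eq_one hc
  have h2d : (0:ℝ) < 2 ^ d := by positivity
  rcases le_or_gt u 1 with hu1 | hu1
  · have hg0 := mul_nonneg hc0 (profile_nonneg d hu.le)
    have hg2 : c * profile d u ≤ c * 2 := mul_le_mul_of_nonneg_left
      ((profile_le_arctan hd hu).trans ((arctan_lt_pi_div_two u).le.trans
        (by linarith [pi_le_four]))) hc0
    calc |1 - c * profile d u| ≤ 1 + 2 * c := abs_le.2 ⟨by linarith, by linarith⟩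
      _ ≤ 2 * (1 + 2 * c + 2 ^ d) / (1 + u) := by
          rw [le_div_iff₀ (by positivity)]
          nlinarith
  · calc |1 - c * profile d u| ≤ (c + 2 ^ d) / u :=
          abs_one_sub_mul_profile_le_of_one_le hd hc hu1.le
      _ ≤ 2 * (1 + 2 * c + 2 ^ d) / (1 + u) := by
          rw [div_le_div_iff₀ (by positivity) (by positivity)]
          nlinarith

theorem intervalIntegrable_profile (hd : 1 ≤ d) {r : ℝ} (hr : 0 ≤ r) :
    IntervalIntegrable (profile d) volume 0 r := by
  have hmeas : Measurable (profile d) :=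
    (by unfold weight; fun_prop : Measurable (weight d)).mul
      (continuous_primitive (continuous_density hd).intervalIntegrable 0).measurable
  rw [intervalIntegrable_iff_integrableOn_Ioc_of_le hr]
  refine Measure.integrableOn_of_bounded (M := 2) measure_Ioc_lt_top.ne
    hmeas.aestronglyMeasurable ?_
  filter_upwards [ae_restrict_mem measurableSet_Ioc] with u hu
  rw [norm_of_nonneg (profile_nonneg d hu.1.le)]
  linarith [profile_le_arctan hd hu.1, arctan_lt_pi_div_two u, pi_le_four]

theorem abs_sub_mul_integral_profile_le (hd : 1 ≤ d) (hc : c * ∫ v in Ioi 0, density d v = 1)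
    {r : ℝ} (hr : 0 ≤ r) :
    |r - c * ∫ u in (0:ℝ)..r, profile d u| ≤ 2 * (1 + 2 * c + 2 ^ d) * log (1 + r) := by
  set K : ℝ := 2 * (1 + 2 * c + 2 ^ d)
  have hbound : IntervalIntegrable (fun u => K * (1 + u)⁻¹) volume 0 r := by
    refine ContinuousOn.intervalIntegrable fun u hu => ContinuousAt.continuousWithinAt ?_
    have : 0 ≤ u := (uIcc_of_le hr ▸ hu).1
    fun_prop (disch := positivity)
  calc |r - c * ∫ u in (0:ℝ)..r, profile d u|
      = ‖∫ u in (0:ℝ)..r, (1 - c * profile d u)‖ := by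
        rw [integral_sub intervalIntegrable_const ((intervalIntegrable_profile hd hr).const_mul c),
          intervalIntegral.integral_const_mul, intervalIntegral.integral_const, sub_zero,
          smul_eq_mul, mul_one, norm_eq_abs]
    _ ≤ ∫ u in (0:ℝ)..r, K * (1 + u)⁻¹ := by
        refine norm_integral_le_of_norm_le hr (ae_of_all _ fun u hu => ?_) hbound
        rw [norm_eq_abs, ← div_eq_mul_inv]
        exact abs_one_sub_mul_profile_le hd hc hu.1
    _ = K * log (1 + r) := by
        rw [intervalIntegral.integral_const_mul, integral_comp_add_left (fun u => u⁻¹),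
          integral_inv_of_pos (by norm_num) (by linarith), add_zero, div_one]

end RadialProfile

/-- Logarithmic bound on `f̂₀(r) = r − f₀(r)`: there are constants `A, B` with
`|r − f₀(r)| ≤ A + B log(1+r)` for all `r ≥ 0`. -/
theorem stmt17 (d : ℕ) (hd : 2 ≤ d) (γ : ℝ)
    (hγ : γ = (1 / Real.sqrt π) * (Real.Gamma (((d : ℝ) + 1) / 2) / Real.Gamma ((d : ℝ) / 2)))
    (f₀ : ℝ → ℝ)
    (hf : ∀ r : ℝ, f₀ r = 2 * γ * ∫ u in (0:ℝ)..r,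
      ((1 + u ^ 2) / u ^ 2) ^ (((d : ℝ) - 1) / 2) *
        ∫ v in (0:ℝ)..u, v ^ ((d : ℝ) - 1) / (1 + v ^ 2) ^ (((d : ℝ) + 1) / 2)) :
    ∃ A B : ℝ, ∀ r : ℝ, 0 ≤ r → |r - f₀ r| ≤ A + B * Real.log (1 + r) := by
  have hd₁ : 1 ≤ d := by omega
  have hmass : 2 * γ * ∫ v in Ioi 0, RadialProfile.density d v = 1 := by
    have := (Gamma_pos_of_pos (by positivity : (0:ℝ) < d / 2)).ne'
    have := (Gamma_pos_of_pos (by positivity : (0:ℝ) < (d + 1) / 2)).ne'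
    have := (sqrt_pos.2 pi_pos).ne'
    rw [RadialProfile.integral_density_Ioi hd₁, hγ]
    field_simp
  refine ⟨0, 2 * (1 + 2 * (2 * γ) + 2 ^ d), fun r hr => ?_⟩
  rw [zero_add, hf r]
  exact RadialProfile.abs_sub_mul_integral_profile_le hd₁ hmass hr
end
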